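/- arXiv:1802.00548 — 6 statements merged into one kernel-verified Lean document; each statement's English description precedes it below -/
import Mathlib

section
/- Let l ∈ ℕ and 1 ≤ e ≤ 2l. If there exists a closed walk of length 2l whose induced subgraph has exactly e+1 vertices and exactly e distinct edges, then e ≤ l. -/
open SimpleGraph

lemma aux_card {V : Type*} [DecidableEq V] {G : SimpleGraph V} {u v : V} (p : G.Walk u v) :
    p.support.toFinset.card ≤ p.edges.toFinset.card + 1 := by
  induction p with
  | nil => simp
  | @cons u a v h p ih =>
    rw [Walk.support_cons, Walk.edges_cons, List.toFinset_cons, List.toFinset_cons]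
    by_cases hu : u ∈ p.support
    · rw [Finset.insert_eq_self.2 (by simpa using hu)]
      exact ih.trans (by gcongr; exact Finset.subset_insert _ _)
    · have he : s(u, a) ∉ p.edges := fun he => hu (p.fst_mem_support_of_mem_edges he)
      rw [Finset.card_insert_of_notMem (by simpa using hu),
        Finset.card_insert_of_notMem (by simpa using he)]
      omega

lemma aux_split {V : Type*} {G : SimpleGraph V} {u v : V} (p : G.Walk u v) {f : Sym2 V}
    (hf : f ∈ p.edges) :
    ∃ (a b : V) (h : G.Adj a b) (q : G.Walk u a) (r : G.Walk b v),
      s(a, b) = f ∧ p = q.append (Walk.cons h r) := by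
  induction p with
  | nil => simp at hf
  | @cons u c v h p ih =>
    rw [Walk.edges_cons, List.mem_cons] at hf
    rcases hf with hf | hf
    · exact ⟨u, c, h, Walk.nil, p, hf.symm, rfl⟩
    · obtain ⟨a, b, hab, q, r, hf', rfl⟩ := ih hf
      exact ⟨a, b, hab, Walk.cons h q, r, hf', rfl⟩

/-- Let `l ∈ ℕ` and `1 ≤ e ≤ 2l`.  If some closed walk of length `2l` on a
simple graph visits exactly `e + 1` distinct vertices and traverses exactly `e` distinct edges,
then `e ≤ l`. -/
theorem statement2 {V : Type*} [DecidableEq V] (G : SimpleGraph V) (l e : ℕ)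
    (he1 : 1 ≤ e) (he2 : e ≤ 2 * l)
    (x : V) (w : G.Walk x x) (hlen : w.length = 2 * l)
    (hvc : w.support.toFinset.card = e + 1) (hec : w.edges.toFinset.card = e) :
    e ≤ l := by
  have key : ∀ f ∈ w.edges.toFinset, 2 ≤ w.edges.count f := by
    intro f hf
    rw [List.mem_toFinset] at hf
    have h1 : 1 ≤ w.edges.count f := List.count_pos_iff.2 hf
    by_contra hc
    have hc1 : w.edges.count f = 1 := by omega
    obtain ⟨a, b, hab, q, r, hfab, hw⟩ := aux_split w hf
    subst hw
    rw [Walk.edges_append, Walk.edges_cons, List.count_append, List.count_cons, hfab,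
      if_pos (beq_self_eq_true f)] at hc1
    have hq : f ∉ q.edges := by
      intro h; have := List.count_pos_iff.2 h; omega
    have hr : f ∉ r.edges := by
      intro h; have := List.count_pos_iff.2 h; omega
    set p2 : G.Walk b a := r.append q with hp2
    have hsub : (q.append (Walk.cons hab r)).support.toFinset ⊆ p2.support.toFinset := by
      intro y hy
      rw [List.mem_toFinset, Walk.mem_support_append_iff, Walk.support_cons,
        List.mem_cons] at hy
      rw [List.mem_toFinset, hp2, Walk.mem_support_append_iff]
      have ha : a ∈ q.support := q.end_mem_support
      rcases hy with h | h | h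
      · exact Or.inr h
      · exact Or.inr (h ▸ ha)
      · exact Or.inl h
    have hesub : p2.edges.toFinset ⊆ (q.append (Walk.cons hab r)).edges.toFinset.erase f := by
      intro g hg
      rw [List.mem_toFinset, hp2, Walk.edges_append, List.mem_append] at hg
      rw [Finset.mem_erase, List.mem_toFinset]
      constructor
      · rintro rfl; tauto
      · rw [Walk.edges_append, Walk.edges_cons, List.mem_append, List.mem_cons]; tauto
    have h2 := aux_card p2
    have h3 := Finset.card_le_card hsub
    have h4 := Finset.card_le_card hesub
    rw [Finset.card_erase_of_mem (List.mem_toFinset.2 hf), hec] at h4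
    rw [hvc] at h3
    omega
  have hsum : ∑ f ∈ w.edges.toFinset, w.edges.count f = w.edges.length := by
    have := Multiset.toFinset_sum_count_eq (↑w.edges : Multiset (Sym2 V))
    simpa using this
  have : 2 * e ≤ 2 * l := by
    calc 2 * e = ∑ _f ∈ w.edges.toFinset, 2 := by rw [Finset.sum_const, hec]; ring
    _ ≤ ∑ f ∈ w.edges.toFinset, w.edges.count f := Finset.sum_le_sum key
    _ = 2 * l := by rw [hsum, Walk.length_edges, hlen]
  omega
end

section
/- Let m ∈ ℕ, n ≥ v ≥ 0, p ∈ (0,1], and let Z ~ Bin(n−v, p). Then E[(Z+1)^{−m}] ≤ m! / ((n−v+1)^m p^m). -/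
/-!
Since `(z+1)…(z+m) ≤ m! (z+1)^m`, the weight `1/(z+1)^m` is at most `m!` times
`1/((z+1)…(z+m))`, and `C(N,z)/((z+1)…(z+m)) = C(N+m,z+m)/((N+1)…(N+m))`. Hence each term of
`E[(Z+1)^{-m}]` for `Z ~ Bin(N, p)` is at most `m!/((N+1)^m p^m)` times the probability that a
`Bin(N+m, p)` variable equals `z+m`, and these probabilities sum to at most `1`.
-/

open Finset Nat

theorem Nat.choose_mul_add_one_pow_le (N m z : ℕ) :
    N.choose z * (N + 1) ^ m ≤ m ! * (z + 1) ^ m * (N + m).choose (z + m) :=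
  calc N.choose z * (N + 1) ^ m
      ≤ N.choose z * (m ! * (N + m).choose m) := by
        rw [← Nat.ascFactorial_eq_factorial_mul_choose]
        gcongr
        exact Nat.pow_succ_le_ascFactorial _ _
    _ = m ! * ((N + m).choose (z + m) * (z + m).choose m) := by
        rw [Nat.choose_mul (Nat.le_add_left m z), Nat.add_sub_cancel, Nat.add_sub_cancel]
        ring
    _ ≤ m ! * ((N + m).choose (z + m) * (z + 1) ^ m) := by
        gcongr
        exact Nat.choose_add_le_add_one_pow z m
    _ = m ! * (z + 1) ^ m * (N + m).choose (z + m) := by ring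

theorem binomial_term_div_add_one_pow_le {p q : ℝ} (hp : 0 < p) (hq : 0 ≤ q) (N m z : ℕ) :
    (N.choose z : ℝ) * p ^ z * q ^ (N - z) / ((z : ℝ) + 1) ^ m
      ≤ m ! / (((N : ℝ) + 1) ^ m * p ^ m)
          * ((N + m).choose (z + m) * p ^ (z + m) * q ^ (N - z)) := by
  have hchoose : (N.choose z : ℝ) * ((N : ℝ) + 1) ^ m
      ≤ m ! * ((z : ℝ) + 1) ^ m * (N + m).choose (z + m) := by
    exact_mod_cast Nat.choose_mul_add_one_pow_le N m z
  calc (N.choose z : ℝ) * p ^ z * q ^ (N - z) / ((z : ℝ) + 1) ^ m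
      = N.choose z / ((z : ℝ) + 1) ^ m * (p ^ z * q ^ (N - z)) := by ring
    _ ≤ m ! * (N + m).choose (z + m) / ((N : ℝ) + 1) ^ m * (p ^ z * q ^ (N - z)) := by
        gcongr ?_ * _
        rw [div_le_div_iff₀ (by positivity) (by positivity)]
        linarith
    _ = m ! / (((N : ℝ) + 1) ^ m * p ^ m)
          * ((N + m).choose (z + m) * p ^ (z + m) * q ^ (N - z)) := by
        field_simp
        ring

theorem sum_range_choose_add_mul_pow_le_one {p q : ℝ} (hp : 0 ≤ p) (hq : 0 ≤ q) (hpq : p + q = 1)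
    (N m : ℕ) :
    ∑ z ∈ range (N + 1), ((N + m).choose (z + m) : ℝ) * p ^ (z + m) * q ^ (N - z) ≤ 1 := by
  have hbinom : ∑ j ∈ range (m + (N + 1)), ((N + m).choose j : ℝ) * p ^ j * q ^ (N + m - j) = 1 := by
    rw [show m + (N + 1) = N + m + 1 by ring]
    calc _ = (p + q) ^ (N + m) := by rw [add_pow]; exact sum_congr rfl fun j _ => by ring
      _ = 1 := by rw [hpq, one_pow]
  rw [← hbinom, sum_range_add _ m (N + 1)]
  refine le_add_of_nonneg_of_le (sum_nonneg fun j _ => by positivity) (le_of_eq ?_)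
  refine sum_congr rfl fun z _ => ?_
  rw [add_comm m z, Nat.add_sub_add_right]

/-- For `Z ~ Bin(n − v, p)` (expectation written as the explicit binomial sum),
`E[(Z+1)^{−m}] ≤ m! / ((n−v+1)^m p^m)`. -/
theorem statement3 (m n v : ℕ) (hv : v ≤ n) (p : ℝ) (hp0 : 0 < p) (hp1 : p ≤ 1) :
    ∑ z ∈ Finset.range (n - v + 1),
        ((n - v).choose z : ℝ) * p ^ z * (1 - p) ^ (n - v - z) / ((z : ℝ) + 1) ^ m
      ≤ (Nat.factorial m : ℝ) / ((((n : ℝ) - (v : ℝ)) + 1) ^ m * p ^ m) := by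
  rw [← Nat.cast_sub hv]
  set N := n - v
  have hq : 0 ≤ 1 - p := by linarith
  calc ∑ z ∈ range (N + 1), (N.choose z : ℝ) * p ^ z * (1 - p) ^ (N - z) / ((z : ℝ) + 1) ^ m
      ≤ ∑ z ∈ range (N + 1), m ! / (((N : ℝ) + 1) ^ m * p ^ m)
          * ((N + m).choose (z + m) * p ^ (z + m) * (1 - p) ^ (N - z)) :=
        sum_le_sum fun z _ => binomial_term_div_add_one_pow_le hp0 hq N m z
    _ = m ! / (((N : ℝ) + 1) ^ m * p ^ m)
          * ∑ z ∈ range (N + 1), ((N + m).choose (z + m) : ℝ) * p ^ (z + m) * (1 - p) ^ (N - z) :=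
        (mul_sum _ _ _).symm
    _ ≤ m ! / (((N : ℝ) + 1) ^ m * p ^ m) := by
        refine mul_le_of_le_one_right (by positivity) ?_
        exact sum_range_choose_add_mul_pow_le_one hp0.le hq (by ring) N m
end

section
/- Let 𝒳 = {X(t)}_{t≥0} be a right-continuous filtration of a finite simplicial complex with all k-th persistent homology birth times equal to 0, and let φ : [0,∞) → [0,∞) be a right-continuous nondecreasing function with φ(0) = 0. Then Σ_{i=1}^{p+q} φ(d_i−) = ∫_{[0,∞)} β_k(X(t)) dφ(t), where d_1,…,d_{p+q} are the death times (possibly ∞), φ(t−) denotes the left limit, and the integral is the Lebesgue–Stieltjes integral against dφ. -/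
open scoped BigOperators

/-- An abstract simplicial complex on the vertex set `Fin n`, given as the finite set of its
(nonempty) simplices. -/
def IsComplex {n : ℕ} (X : Finset (Finset (Fin n))) : Prop :=
  (∀ s ∈ X, s ≠ ∅) ∧ ∀ s ∈ X, ∀ t, t ⊆ s → t ≠ ∅ → t ∈ X

/-- The simplices of cardinality `j` of `X`, where the empty simplex (cardinality `0`,
dimension `-1`) is always present (augmented convention).  Thus `faces X (k+1)` is the set of
`k`-dimensional simplices, and `(faces X 0).card = 1` plays the role of `f₋₁ = 1`. -/
def faces {n : ℕ} (X : Finset (Finset (Fin n))) (j : ℕ) : Finset (Finset (Fin n)) :=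
  (insert (∅ : Finset (Fin n)) X).filter (fun s => s.card = j)

/-- The matrix of the boundary map from chains on simplices of cardinality `j+1` to chains on
simplices of cardinality `j`, with the usual alternating signs (each simplex is oriented by the
increasing order of its vertices).  For `j = 0` this is the augmentation map `⟨v⟩ ↦ 1`. -/
noncomputable def bdryMat {n : ℕ} (X : Finset (Finset (Fin n))) (j : ℕ) :
    Matrix ↥(faces X j) ↥(faces X (j + 1)) ℝ := fun t s =>
  if t.1 ⊆ s.1 then
    (-1 : ℝ) ^ ((s.1 \ t.1).sum fun v => (s.1.filter fun w => w < v).card)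
  else 0

/-- The boundary map (in "cardinality" grading) `∂ : C_{j}(X) → C_{j-1}(X)`, augmented. -/
noncomputable def bdry {n : ℕ} (X : Finset (Finset (Fin n))) (j : ℕ) :
    (↥(faces X (j + 1)) → ℝ) →ₗ[ℝ] (↥(faces X j) → ℝ) :=
  (bdryMat X j).mulVecLin

/-- The `k`-th reduced Betti number of `X` over `ℝ`:
`dim ker ∂_k - dim im ∂_{k+1}` (with the augmented chain complex). -/
noncomputable def betti {n : ℕ} (X : Finset (Finset (Fin n))) (k : ℕ) : ℕ :=
  Module.finrank ℝ (LinearMap.ker (bdry X k)) -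
    Module.finrank ℝ (LinearMap.range (bdry X (k + 1)))

open scoped ENNReal

/-- The left limit `φ(x−)` of a nondecreasing function `φ` (vanishing on `(-∞, 0]`) at an
extended real point `x`, as a value in `ℝ≥0∞`: `sup {φ(t) : 0 ≤ t, t < x}` (so `φ(∞−)` is the
limit of `φ` at `+∞`, and `φ(0−) = 0`). -/
noncomputable def leftLimE (φ : StieltjesFunction ℝ) (x : ℝ≥0∞) : ℝ≥0∞ :=
  ⨆ (t : ℝ) (_ : 0 ≤ t ∧ ENNReal.ofReal t < x), ENNReal.ofReal (φ t)

/-! For `t ≥ 0`, `β_k(X(t))` counts the bars alive at `t`, so by additivity of the integral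
the right-hand side is the sum over the bars of the `dφ`-mass of `[0, d_i)`. Exhausting
`[0, d_i)` by the compact intervals `[0, t]`, of mass `φ(t) - φ(0−) = φ(t)`, shows that this mass
is `φ(d_i−)`. -/

open MeasureTheory Set Finset

/-- By inner regularity: a nonempty compact `K ⊆ S` lies in `Icc a (sSup K) ⊆ S`. -/
theorem measure_eq_iSup_measure_Icc {α : Type*} [ConditionallyCompleteLinearOrder α]
    [TopologicalSpace α] [OrderTopology α] [MeasurableSpace α] (μ : Measure α) [μ.InnerRegular]
    {a : α} {S : Set α} (hS : MeasurableSet S) (hSa : S ⊆ Ici a)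
    (hIcc : ∀ t ∈ S, Icc a t ⊆ S) :
    μ S = ⨆ t ∈ S, μ (Icc a t) := by
  refine le_antisymm ?_ (iSup₂_le fun t ht => measure_mono (hIcc t ht))
  rw [hS.measure_eq_iSup_isCompact μ]
  refine iSup₂_le fun K hKS => iSup_le fun hK => ?_
  rcases K.eq_empty_or_nonempty with rfl | hne
  · simp
  have hmax : sSup K ∈ S := hKS (hK.sSup_mem hne)
  refine le_iSup₂_of_le (sSup K) hmax (measure_mono fun x hx => ?_)
  exact ⟨hSa (hKS hx), le_csSup hK.bddAbove hx⟩

theorem lintegral_card_filter {α ι : Type*} [MeasurableSpace α] [Fintype ι] {μ : Measure α}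
    {P : ι → α → Prop} [∀ i x, Decidable (P i x)] (hP : ∀ i, MeasurableSet {x | P i x}) :
    ∫⁻ x, (#{i | P i x} : ℝ≥0∞) ∂μ = ∑ i, μ {x | P i x} := by
  calc ∫⁻ x, (#{i | P i x} : ℝ≥0∞) ∂μ
      = ∫⁻ x, ∑ i, {x | P i x}.indicator 1 x ∂μ := by
        congr 1 with x
        simp only [Finset.card_filter, Nat.cast_sum, Nat.cast_ite, Nat.cast_one, Nat.cast_zero,
          Set.indicator_apply, Set.mem_ofPred_eq, Pi.one_apply]
    _ = ∑ i, μ {x | P i x} := by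
        rw [lintegral_finsetSum _ fun i _ => measurable_one.indicator (hP i)]
        simp_rw [lintegral_indicator_one (hP _)]

theorem StieltjesFunction.leftLim_zero_of_eq_zero_of_nonpos (φ : StieltjesFunction ℝ)
    (hφ0 : ∀ t : ℝ, t ≤ 0 → φ t = 0) : Function.leftLim φ 0 = 0 :=
  le_antisymm ((φ.mono.leftLim_le le_rfl).trans_eq (hφ0 0 le_rfl))
    ((hφ0 (-1) (by norm_num)).symm.trans_le (φ.mono.le_leftLim (by norm_num)))

theorem StieltjesFunction.measure_setOf_nonneg_ofReal_lt (φ : StieltjesFunction ℝ)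
    (hφ0 : ∀ t : ℝ, t ≤ 0 → φ t = 0) (x : ℝ≥0∞) :
    φ.measure {t | 0 ≤ t ∧ ENNReal.ofReal t < x} = leftLimE φ x := by
  have hS : MeasurableSet {t : ℝ | 0 ≤ t ∧ ENNReal.ofReal t < x} :=
    measurableSet_Ici.inter (measurableSet_lt ENNReal.measurable_ofReal measurable_const)
  rw [measure_eq_iSup_measure_Icc φ.measure hS (fun t ht => ht.1)
    (fun t ht s hs => ⟨hs.1, (ENNReal.ofReal_le_ofReal hs.2).trans_lt ht.2⟩)]
  simp_rw [StieltjesFunction.measure_Icc, φ.leftLim_zero_of_eq_zero_of_nonpos hφ0, sub_zero]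
  rfl

theorem statement12_general {n : ℕ} (k : ℕ) (X : ℝ → Finset (Finset (Fin n)))
    (m : ℕ) (d : Fin m → ℝ≥0∞)
    (hbars : ∀ t : ℝ, 0 ≤ t →
      (betti (X t) k : ℕ)
        = (Finset.univ.filter fun i : Fin m => ENNReal.ofReal t < d i).card)
    (φ : StieltjesFunction ℝ) (hφ0 : ∀ t : ℝ, t ≤ 0 → φ t = 0) :
    ∑ i : Fin m, leftLimE φ (d i)
      = ∫⁻ t in Set.Ici (0 : ℝ), (betti (X t) k : ℝ≥0∞) ∂φ.measure := by
  have hmeas : ∀ i, MeasurableSet {t : ℝ | ENNReal.ofReal t < d i} := fun i =>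
    measurableSet_lt ENNReal.measurable_ofReal measurable_const
  calc ∑ i, leftLimE φ (d i)
      = ∑ i, φ.measure.restrict (Set.Ici 0) {t | ENNReal.ofReal t < d i} := by
        refine Finset.sum_congr rfl fun i _ => ?_
        rw [Measure.restrict_apply (hmeas i), inter_comm,
          ← φ.measure_setOf_nonneg_ofReal_lt hφ0]
        rfl
    _ = ∫⁻ t in Set.Ici 0, (#{i | ENNReal.ofReal t < d i} : ℝ≥0∞) ∂φ.measure :=
        (lintegral_card_filter hmeas).symm
    _ = ∫⁻ t in Set.Ici 0, (betti (X t) k : ℝ≥0∞) ∂φ.measure :=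
        setLIntegral_congr_fun measurableSet_Ici fun t ht => by rw [hbars t ht]

/-- Let `𝒳 = {X(t)}_{t ≥ 0}` be a right-continuous filtration of a finite
simplicial complex whose `k`-th persistent homology bars all have birth time `0` and death
times `d_1, …, d_m` (possibly `∞`), i.e. for `t ≥ 0` the `k`-th reduced Betti number of `X(t)`
is the number of `i` with `t < d_i`.  Let `φ` be a right-continuous nondecreasing function with
`φ(t) = 0` for `t ≤ 0` (in particular `φ(0) = 0` and `φ ≥ 0`).  Then
`Σ_{i=1}^{m} φ(d_i−) = ∫_{[0,∞)} β_k(X(t)) dφ(t)` (Lebesgue–Stieltjes integral). -/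
theorem statement12 {n : ℕ} (k : ℕ) (X : ℝ → Finset (Finset (Fin n)))
    (hcplx : ∀ t, IsComplex (X t))
    (hmono : ∀ s t : ℝ, s ≤ t → X s ⊆ X t)
    (hrc : ∀ t : ℝ, ∃ ε > 0, ∀ s, t ≤ s → s < t + ε → X s = X t)
    (m : ℕ) (d : Fin m → ℝ≥0∞) (hd : ∀ i, 0 < d i)
    (hbars : ∀ t : ℝ, 0 ≤ t →
      (betti (X t) k : ℕ)
        = (Finset.univ.filter fun i : Fin m => ENNReal.ofReal t < d i).card)
    (φ : StieltjesFunction ℝ) (hφ0 : ∀ t : ℝ, t ≤ 0 → φ t = 0) :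
    ∑ i : Fin m, leftLimE φ (d i)
      = ∫⁻ t in Set.Ici (0 : ℝ), (betti (X t) k : ℝ≥0∞) ∂φ.measure :=
  statement12_general k X m d hbars φ hφ0
end

section
/- For every integer d ≥ 2, the equation (d+1)(1−t) + (1+dt) log t = 0 has a unique root t_d^* in the open interval (0,1). -/
/-!
Dividing by `1 + d t > 0` turns the equation into `g t = 0` with
`g t = log t + (d + 1)(1 - t)/(1 + d t)`, whose derivative `(1 - d² t)(1 - t) / (t (1 + d t)²)`
changes sign exactly once, at `t = 1/d²`. Hence `g` increases on `(0, 1/d²]` and decreases on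
`[1/d², 1]` down to `g 1 = 0`, so it is positive on `[1/d², 1)`, while `g t → -∞` as `t → 0⁺`.
The intermediate value theorem and monotonicity give exactly one zero, lying in `(0, 1/d²)`.
-/

open Real Set

namespace Statement13

noncomputable def reducedF (D t : ℝ) : ℝ :=
  log t + (D + 1) * (1 - t) / (1 + D * t)

variable {D t : ℝ}

lemma mul_reducedF (hD : 0 ≤ D) (ht : 0 < t) :
    (1 + D * t) * reducedF D t = (D + 1) * (1 - t) + (1 + D * t) * log t := by
  have : 1 + D * t ≠ 0 := by positivity
  unfold reducedF
  field_simp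
  ring

lemma reducedF_one (D : ℝ) : reducedF D 1 = 0 := by
  simp [reducedF]

lemma reducedF_lt_log_add (hD : 0 ≤ D) (ht : 0 < t) : reducedF D t < log t + (D + 1) := by
  have hden : 0 < 1 + D * t := by positivity
  have : (D + 1) * (1 - t) / (1 + D * t) < D + 1 := by
    rw [div_lt_iff₀ hden]
    nlinarith [mul_pos (pow_pos (by linarith : 0 < D + 1) 2) ht]
  unfold reducedF
  linarith

lemma hasDerivAt_reducedF (hD : 0 ≤ D) (ht : 0 < t) :
    HasDerivAt (reducedF D) ((1 - D ^ 2 * t) * (1 - t) / (t * (1 + D * t) ^ 2)) t := by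
  have hden : 1 + D * t ≠ 0 := by positivity
  have hnum : HasDerivAt (fun s : ℝ => (D + 1) * (1 - s)) (-(D + 1)) t := by
    simpa using ((hasDerivAt_id t).const_sub 1).const_mul (D + 1)
  have hdenom : HasDerivAt (fun s : ℝ => 1 + D * s) D t := by
    simpa using ((hasDerivAt_id t).const_mul D).const_add 1
  refine ((hasDerivAt_log ht.ne').add (hnum.div hdenom hden)).congr_deriv ?_
  field_simp
  ring

lemma continuousOn_reducedF (hD : 0 ≤ D) : ContinuousOn (reducedF D) (Ioi 0) := fun _ ht =>
  (hasDerivAt_reducedF hD ht).continuousAt.continuousWithinAt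

lemma strictMonoOn_reducedF (hD : 1 ≤ D) : StrictMonoOn (reducedF D) (Ioc 0 (D ^ 2)⁻¹) := by
  have hD2 : 0 < D ^ 2 := by positivity
  apply strictMonoOn_of_deriv_pos (convex_Ioc 0 _)
    ((continuousOn_reducedF (by linarith)).mono Ioc_subset_Ioi_self)
  intro t ht
  rw [interior_Ioc] at ht
  obtain ⟨ht0, htc⟩ := ht
  rw [(hasDerivAt_reducedF (by linarith) ht0).deriv]
  have h1 : 0 < 1 - D ^ 2 * t := by
    have := mul_lt_mul_of_pos_left htc hD2
    rw [mul_inv_cancel₀ hD2.ne'] at this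
    linarith
  have h2 : 0 < 1 - t := by nlinarith
  positivity

lemma strictAntiOn_reducedF (hD : 0 < D) : StrictAntiOn (reducedF D) (Icc (D ^ 2)⁻¹ 1) := by
  have hD2 : 0 < D ^ 2 := by positivity
  apply strictAntiOn_of_deriv_neg (convex_Icc _ _)
    ((continuousOn_reducedF hD.le).mono fun s hs => lt_of_lt_of_le (by positivity) hs.1)
  intro t ht
  rw [interior_Icc] at ht
  obtain ⟨hct, ht1⟩ := ht
  have ht0 : 0 < t := lt_trans (by positivity) hct
  rw [(hasDerivAt_reducedF hD.le ht0).deriv]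
  have h1 : 1 - D ^ 2 * t < 0 := by
    have := mul_lt_mul_of_pos_left hct hD2
    rw [mul_inv_cancel₀ hD2.ne'] at this
    linarith
  have h2 : 0 < 1 - t := by linarith
  exact div_neg_of_neg_of_pos (mul_neg_of_neg_of_pos h1 h2) (by positivity)

lemma reducedF_pos (hD : 0 < D) (ht : t ∈ Ico (D ^ 2)⁻¹ 1) : 0 < reducedF D t := by
  simpa [reducedF_one] using
    strictAntiOn_reducedF hD ⟨ht.1, ht.2.le⟩ ⟨ht.1.trans ht.2.le, le_rfl⟩ ht.2

lemma exists_reducedF_neg (hD : 0 < D) : ∃ t ∈ Ioo 0 (D ^ 2)⁻¹, reducedF D t < 0 := by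
  have hc : 0 < (D ^ 2)⁻¹ := by positivity
  set t₀ := min (exp (-(D + 1))) ((D ^ 2)⁻¹ / 2)
  have ht₀ : 0 < t₀ := lt_min (exp_pos _) (by positivity)
  have hlog : log t₀ ≤ -(D + 1) :=
    (log_le_log ht₀ (min_le_left _ _)).trans_eq (log_exp _)
  refine ⟨t₀, ⟨ht₀, (min_le_right _ _).trans_lt (by linarith)⟩, ?_⟩
  linarith [reducedF_lt_log_add hD.le ht₀]

theorem existsUnique_reducedF_eq_zero (hD : 1 < D) :
    ∃! t, t ∈ Ioo 0 1 ∧ reducedF D t = 0 := by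
  have hD0 : 0 < D := by linarith
  have hc1 : (D ^ 2)⁻¹ < 1 := inv_lt_one_of_one_lt₀ (by nlinarith)
  obtain ⟨t₀, ⟨ht₀, ht₀c⟩, hneg⟩ := exists_reducedF_neg hD0
  obtain ⟨s, hs, hs0⟩ : ∃ s ∈ Icc t₀ (D ^ 2)⁻¹, reducedF D s = 0 :=
    intermediate_value_Icc ht₀c.le
      ((continuousOn_reducedF hD0.le).mono fun x hx => ht₀.trans_le hx.1)
      ⟨hneg.le, (reducedF_pos hD0 ⟨le_rfl, hc1⟩).le⟩
  have hs_pos : 0 < s := ht₀.trans_le hs.1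
  refine ⟨s, ⟨⟨hs_pos, hs.2.trans_lt hc1⟩, hs0⟩, ?_⟩
  rintro t ⟨⟨ht0, ht1⟩, ht⟩
  have htc : t ≤ (D ^ 2)⁻¹ := by
    by_contra! h
    exact (reducedF_pos hD0 ⟨h.le, ht1⟩).ne' ht
  exact strictMonoOn_reducedF hD.le |>.injOn ⟨ht0, htc⟩ ⟨hs_pos, hs.2⟩ (ht.trans hs0.symm)

theorem existsUnique_root (hD : 1 < D) :
    ∃! t, t ∈ Ioo 0 1 ∧ (D + 1) * (1 - t) + (1 + D * t) * log t = 0 := by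
  refine (existsUnique_congr fun t => and_congr_right fun ht => ?_).mp
    (existsUnique_reducedF_eq_zero hD)
  have hden : 0 < 1 + D * t := by nlinarith [ht.1]
  rw [← mul_reducedF (by linarith) ht.1, mul_eq_zero, or_iff_right hden.ne']

end Statement13

/-- For every integer `d ≥ 2`, the equation
`(d+1)(1−t) + (1+dt)·log t = 0` has a unique root `t_d^*` in `(0, 1)`. -/
theorem statement13 (d : ℕ) (hd : 2 ≤ d) :
    ∃! t : ℝ, t ∈ Set.Ioo (0 : ℝ) 1 ∧
      ((d : ℝ) + 1) * (1 - t) + (1 + (d : ℝ) * t) * Real.log t = 0 := by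
  exact Statement13.existsUnique_root (by exact_mod_cast hd)
end

section
/- Let X ~ X(n, 𝐩) be a multi-parameter random complex and 0 ≤ k ≤ n−2. For τ ⊆ V with #τ = k and P(τ ∈ X) > 0, conditionally on the event {τ ∈ X}, the 1-skeleton of the link lk_X(τ) is distributed as follows: each vertex v ∈ V∖τ belongs to the link independently with probability r_{k−1} = Π_{i=0}^{k} p_i^{C(k,i)}, and given the vertex set, each edge between link vertices is present independently with probability r_k / r_{k−1} = Π_{i=1}^{k+1} p_i^{C(k,i−1)}. In particular the number of vertices of lk_X(τ) is Bin(n−k, r_{k−1})-distributed. -/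
/-!
Every face of `τ ∪ σ`, for `σ` disjoint from `τ`, is `ρ = s ∪ c` with `s ⊆ τ` and `c = ρ \ τ ⊆ σ`.
Grouping the coins by `c`, the event `σ ∪ τ ∈ X` is the intersection over `c ⊆ σ` of the block
events "every face `ρ` with `ρ \ τ = c` passes its coin", and different blocks use disjoint sets of
independent coins. The block `c = ∅` is the event `τ ∈ X`. Given it, a vertex `v ∉ τ` lies in the
link iff the block `{v}` passes, which has probability `∏_{s ⊆ τ} p_{#s} = r_{k-1}`, and a pair of
link vertices is an edge iff its own block passes, with probability `∏_{s ⊆ τ} p_{#s+1} =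
r_k / r_{k-1}`. Independence of the blocks gives the product formula; summing it over the vertex
sets of size `m` gives the binomial law.
-/

open MeasureTheory
open scoped BigOperators ENNReal

/-- The probability space for the multi-parameter random complex on `n` vertices: an independent
uniform-`[0,1]` random label for each potential simplex. -/
noncomputable def coinSpace (n : ℕ) : Measure (Finset (Fin n) → ℝ) :=
  Measure.pi fun _ => volume.restrict (Set.Icc (0 : ℝ) 1)

open Classical in
/-- The multi-parameter random complex `X(n, 𝐩)`: a simplex `σ` (of dimension `σ.card − 1`) is
present iff for every nonempty face `τ ⊆ σ` the coin of `τ` succeeds, i.e.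
`ω τ ≤ p (dim τ)`.  This realizes the iterative construction in which each `i`-simplex whose
boundary is present is retained with independent probability `p i`. -/
noncomputable def Xof {n : ℕ} (p : ℕ → ℝ) (ω : Finset (Fin n) → ℝ) :
    Finset (Finset (Fin n)) :=
  Finset.univ.filter fun σ =>
    σ ≠ ∅ ∧ ∀ τ ∈ σ.powerset, τ ≠ ∅ → ω τ ≤ p (τ.card - 1)

/-- The link `lk_X(τ) = {σ ∈ X : σ ∩ τ = ∅ and σ ∪ τ ∈ X}`. -/
def link {n : ℕ} (X : Finset (Finset (Fin n))) (τ : Finset (Fin n)) :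
    Finset (Finset (Fin n)) :=
  X.filter (fun σ => σ ∩ τ = ∅ ∧ σ ∪ τ ∈ X)

/-- The vertex set of the link `lk_X(τ)`. -/
def linkVerts {n : ℕ} (X : Finset (Finset (Fin n))) (τ : Finset (Fin n)) : Finset (Fin n) :=
  Finset.univ.filter (fun v => {v} ∈ link X τ)

/-- The degree of `v` in the `1`-skeleton of the link `lk_X(τ)`. -/
def linkDeg {n : ℕ} (X : Finset (Finset (Fin n))) (τ : Finset (Fin n)) (v : Fin n) : ℕ :=
  (Finset.univ.filter (fun w => w ≠ v ∧ ({v, w} : Finset (Fin n)) ∈ link X τ)).card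

/-- The averaging matrix of the `1`-skeleton of the link `lk_X(τ)`, indexed by the vertices of
the link: entries `1/deg v` for neighbors, `1` on the diagonal at isolated vertices, `0`
otherwise. -/
noncomputable def linkAvg {n : ℕ} (X : Finset (Finset (Fin n))) (τ : Finset (Fin n)) :
    Matrix ↥(linkVerts X τ) ↥(linkVerts X τ) ℝ := fun v w =>
  if v.1 ≠ w.1 ∧ ({v.1, w.1} : Finset (Fin n)) ∈ link X τ then 1 / (linkDeg X τ v.1 : ℝ)
  else if v = w ∧ linkDeg X τ v.1 = 0 then 1 else 0

/-- The random-walk Laplacian `𝓛 = I − A` of the `1`-skeleton of the link `lk_X(τ)`. -/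
noncomputable def linkLap {n : ℕ} (X : Finset (Finset (Fin n))) (τ : Finset (Fin n)) :
    Matrix ↥(linkVerts X τ) ↥(linkVerts X τ) ℝ :=
  1 - linkAvg X τ

/-- `r_{k−1} = Π_{i=0}^{k} p_i^{C(k,i)}`. -/
noncomputable def rPrev (p : ℕ → ℝ) (k : ℕ) : ℝ :=
  ∏ i ∈ Finset.range (k + 1), p i ^ (k.choose i)

/-- `r_k = Π_{i=0}^{k+1} p_i^{C(k+1,i)}`. -/
noncomputable def rCur (p : ℕ → ℝ) (k : ℕ) : ℝ :=
  ∏ i ∈ Finset.range (k + 2), p i ^ ((k + 1).choose i)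

section FinsetLemmas

open Finset

variable {α M : Type*} [CommMonoid M]

theorem prod_ite_mem_of_subset [DecidableEq α] {K P : Finset α} (h : P ⊆ K) (a b : M) :
    ∏ c ∈ K, (if c ∈ P then a else b) = a ^ #P * b ^ (#K - #P) := by
  rw [prod_ite, prod_const, prod_const, filter_mem_eq_inter, inter_eq_right.2 h, filter_not,
    filter_mem_eq_inter, inter_eq_right.2 h, card_sdiff_of_subset h]

theorem filter_eq_iff_of_subset {K P : Finset α} (h : P ⊆ K) (q : α → Prop) [DecidablePred q] :
    K.filter q = P ↔ ∀ c ∈ K, (q c ↔ c ∈ P) := by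
  constructor
  · rintro rfl c hc
    simp [hc]
  · intro hq
    ext c
    rw [mem_filter]
    exact ⟨fun ⟨hc, hqc⟩ => (hq c hc).1 hqc, fun hc => ⟨h hc, (hq c (h hc)).2 hc⟩⟩

end FinsetLemmas

theorem dependsOn_mem_inter {ι : Type*} {α : ι → Type*} {s : Set ι} {A B : Set (∀ i, α i)}
    (hA : DependsOn (· ∈ A) s) (hB : DependsOn (· ∈ B) s) : DependsOn (· ∈ A ∩ B) s :=
  fun _ _ h => congrArg₂ (· ∧ ·) (hA h) (hB h)

section BlockIndependence

variable {ι : Type*} [Fintype ι] {α : ι → Type*} [∀ i, MeasurableSpace (α i)]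
  (μ : ∀ i, Measure (α i)) [∀ i, IsProbabilityMeasure (μ i)]

theorem measure_pi_inter_of_dependsOn {s : Set ι} {A B : Set (∀ i, α i)}
    (hA : MeasurableSet A) (hB : MeasurableSet B)
    (hAs : DependsOn (· ∈ A) s) (hBs : DependsOn (· ∈ B) sᶜ) :
    Measure.pi μ (A ∩ B) = Measure.pi μ A * Measure.pi μ B := by
  classical
  have := fun i => nonempty_of_isProbabilityMeasure (μ i)
  let e := MeasurableEquiv.piEquivPiSubtypeProd α (· ∈ s)
  have he := measurePreserving_piEquivPiSubtypeProd μ (· ∈ s)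
  let A' := (fun x => e.symm (x, fun _ => Classical.arbitrary _)) ⁻¹' A
  let B' := (fun y => e.symm (fun _ => Classical.arbitrary _, y)) ⁻¹' B
  have hA' : MeasurableSet A' := hA.preimage (by fun_prop)
  have hB' : MeasurableSet B' := hB.preimage (by fun_prop)
  have hAe : A = e ⁻¹' (A' ×ˢ Set.univ) := by
    ext ω
    simp only [Set.mem_preimage, Set.mem_prod, Set.mem_univ, and_true, A']
    refine (hAs fun i hi => ?_).to_iff
    simp [e, MeasurableEquiv.piEquivPiSubtypeProd, Equiv.piEquivPiSubtypeProd, hi]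
  have hBe : B = e ⁻¹' (Set.univ ×ˢ B') := by
    ext ω
    simp only [Set.mem_preimage, Set.mem_prod, Set.mem_univ, true_and, B']
    refine (hBs fun i (hi : i ∉ s) => ?_).to_iff
    simp [e, MeasurableEquiv.piEquivPiSubtypeProd, Equiv.piEquivPiSubtypeProd, hi]
  have hAB : A ∩ B = e ⁻¹' (A' ×ˢ B') := by
    rw [hAe, hBe, ← Set.preimage_inter, Set.prod_inter_prod, Set.inter_univ, Set.univ_inter]
  rw [hAB, hAe, hBe, he.measure_preimage (hA'.prod hB').nullMeasurableSet,
    he.measure_preimage (hA'.prod .univ).nullMeasurableSet,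
    he.measure_preimage (MeasurableSet.univ.prod hB').nullMeasurableSet]
  simp [Measure.prod_prod]

theorem measure_pi_biInter_of_dependsOn {κ : Type*} (J : Finset κ) {t : κ → Set ι}
    {E : κ → Set (∀ i, α i)} (ht : (J : Set κ).PairwiseDisjoint t)
    (hE : ∀ j ∈ J, MeasurableSet (E j)) (hEt : ∀ j ∈ J, DependsOn (· ∈ E j) (t j)) :
    Measure.pi μ (⋂ j ∈ J, E j) = ∏ j ∈ J, Measure.pi μ (E j) := by
  classical
  induction J using Finset.induction_on with
  | empty => simp
  | insert a J ha ih =>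
    simp only [Finset.mem_insert, forall_eq_or_imp, Finset.coe_insert] at hE hEt ht
    rw [Finset.set_biInter_insert, Finset.prod_insert ha,
      ← ih (ht.subset (Set.subset_insert _ _)) hE.2 hEt.2]
    refine measure_pi_inter_of_dependsOn μ hE.1
      (.biInter J.countable_toSet hE.2) hEt.1 fun ω ω' h => ?_
    simp only [Set.mem_iInter]
    refine propext <| forall₂_congr fun j hj => (hEt.2 j hj fun i hi => h i fun hia => ?_).to_iff
    have hja : j ≠ a := by rintro rfl; exact ha hj
    exact (ht (Set.mem_insert a J) (Set.mem_insert_of_mem a hj) hja.symm).ne_of_mem hia hi rfl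

end BlockIndependence


instance : IsProbabilityMeasure (volume.restrict (Set.Icc (0 : ℝ) 1)) :=
  ⟨by simp [Real.volume_Icc]⟩

instance (n : ℕ) : IsProbabilityMeasure (coinSpace n) := by
  unfold coinSpace; infer_instance

theorem volume_restrict_Icc_Iic {x : ℝ} (hx : x ∈ Set.Icc (0 : ℝ) 1) :
    volume.restrict (Set.Icc (0 : ℝ) 1) (Set.Iic x) = ENNReal.ofReal x := by
  have : Set.Iic x ∩ Set.Icc 0 1 = Set.Icc 0 x := by
    ext y
    simp only [Set.mem_inter_iff, Set.mem_Iic, Set.mem_Icc]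
    exact ⟨fun h => ⟨h.2.1, h.1⟩, fun h => ⟨h.2, h.1, h.2.trans hx.2⟩⟩
  rw [Measure.restrict_apply measurableSet_Iic, this, Real.volume_Icc, sub_zero]

section RandomComplex

open Finset

variable {n : ℕ}

/-- For `c` disjoint from `τ`: every nonempty face `ρ` of `τ ∪ c` containing `c` passes its coin. -/
def blockPasses (p : ℕ → ℝ) (τ c : Finset (Fin n)) : Set (Finset (Fin n) → ℝ) :=
  {ω | ∀ ρ : Finset (Fin n), ρ.Nonempty → ρ \ τ = c → ω ρ ≤ p (#ρ - 1)}

def passPattern (p : ℕ → ℝ) (τ : Finset (Fin n)) (K P : Finset (Finset (Fin n))) :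
    Set (Finset (Fin n) → ℝ) :=
  {ω | ∀ c ∈ K, ω ∈ blockPasses p τ c ↔ c ∈ P}

/-- `∏_{s ⊆ τ} p_{#s + j - 1}` for `#τ = k`, grouped by `#s`: the probability that
`blockPasses p τ c` holds when `#c = j ≥ 1`. -/
noncomputable def passProb (p : ℕ → ℝ) (k j : ℕ) : ℝ :=
  ∏ i ∈ range (k + 1), p (i + j - 1) ^ k.choose i

variable (p : ℕ → ℝ) (τ : Finset (Fin n))

open Classical in
theorem blockPasses_eq_pi (c : Finset (Fin n)) :
    blockPasses p τ c = Set.univ.pi fun ρ =>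
      if ρ.Nonempty ∧ ρ \ τ = c then Set.Iic (p (#ρ - 1)) else Set.univ := by
  ext ω
  simp only [blockPasses, Set.mem_ofPred_eq, Set.mem_pi, Set.mem_univ, true_implies]
  refine forall_congr' fun ρ => ?_
  split_ifs with h
  · simp [h]
  · exact iff_of_true (fun h₁ h₂ => (h ⟨h₁, h₂⟩).elim) trivial

theorem measurableSet_blockPasses (c : Finset (Fin n)) :
    MeasurableSet (blockPasses p τ c) := by
  classical
  rw [blockPasses_eq_pi]
  exact .univ_pi fun ρ => by split_ifs <;> measurability

theorem dependsOn_blockPasses (c : Finset (Fin n)) :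
    DependsOn (· ∈ blockPasses p τ c) {ρ | ρ \ τ = c} := fun ω ω' h =>
  propext <| forall_congr' fun ρ => imp_congr_right fun _ => forall_congr' fun hρ => by
    rw [h ρ hρ]

theorem filter_sdiff_eq_image {c : Finset (Fin n)} (hc : c.Nonempty) (hcτ : Disjoint c τ) :
    univ.filter (fun ρ => ρ.Nonempty ∧ ρ \ τ = c) = τ.powerset.image (· ∪ c) := by
  ext ρ
  simp only [mem_filter, mem_univ, true_and, mem_image, mem_powerset]
  constructor
  · rintro ⟨-, rfl⟩
    exact ⟨ρ ∩ τ, inter_subset_right, by rw [union_comm, sdiff_union_inter]⟩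
  · rintro ⟨s, hs, rfl⟩
    exact ⟨hc.mono subset_union_right, by
      rw [union_sdiff_distrib, sdiff_eq_empty_iff_subset.2 hs, hcτ.sdiff_eq_left, empty_union]⟩

theorem measure_blockPasses (hp : ∀ i, p i ∈ Set.Icc (0 : ℝ) 1) {c : Finset (Fin n)}
    (hc : c.Nonempty) (hcτ : Disjoint c τ) :
    coinSpace n (blockPasses p τ c) = ENNReal.ofReal (passProb p #τ #c) := by
  classical
  have hinj : Set.InjOn (· ∪ c) (τ.powerset : Set (Finset (Fin n))) := fun s hs t ht hst => by
    simp only [coe_powerset, Set.mem_preimage, Set.mem_powerset_iff, coe_subset] at hs ht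
    simpa only [union_sdiff_cancel_right (hcτ.symm.mono_left hs),
      union_sdiff_cancel_right (hcτ.symm.mono_left ht)] using congrArg (· \ c) hst
  rw [blockPasses_eq_pi, coinSpace, Measure.pi_pi]
  simp only [apply_ite (volume.restrict (Set.Icc (0 : ℝ) 1)), volume_restrict_Icc_Iic (hp _),
    measure_univ]
  rw [← prod_filter, filter_sdiff_eq_image τ hc hcτ, prod_image hinj, passProb,
    ENNReal.ofReal_prod_of_nonneg fun i _ => pow_nonneg (hp _).1 _, prod_powerset]
  refine prod_congr rfl fun i _ => ?_
  rw [prod_congr rfl fun s hs => by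
      rw [card_union_of_disjoint (hcτ.symm.mono_left (mem_powersetCard.1 hs).1),
        (mem_powersetCard.1 hs).2],
    prod_const, card_powersetCard, ENNReal.ofReal_pow (hp _).1]

theorem passProb_nonneg (hp : ∀ i, p i ∈ Set.Icc (0 : ℝ) 1) (k j : ℕ) : 0 ≤ passProb p k j :=
  prod_nonneg fun _ _ => pow_nonneg (hp _).1 _

theorem passProb_le_one (hp : ∀ i, p i ∈ Set.Icc (0 : ℝ) 1) (k j : ℕ) : passProb p k j ≤ 1 :=
  prod_le_one (fun _ _ => pow_nonneg (hp _).1 _) fun _ _ => pow_le_one₀ (hp _).1 (hp _).2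

theorem measurableSet_setOf_mem_blockPasses_iff (c : Finset (Fin n)) (q : Prop) :
    MeasurableSet {ω | ω ∈ blockPasses p τ c ↔ q} := by
  by_cases hq : q
  · simpa [hq] using measurableSet_blockPasses p τ c
  · simp only [hq, iff_false]
    exact (measurableSet_blockPasses p τ c).compl

theorem passPattern_eq_biInter (K P : Finset (Finset (Fin n))) :
    passPattern p τ K P = ⋂ c ∈ K, {ω | ω ∈ blockPasses p τ c ↔ c ∈ P} := by
  ext ω
  simp [passPattern]

theorem measurableSet_passPattern (K P : Finset (Finset (Fin n))) :
    MeasurableSet (passPattern p τ K P) := by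
  rw [passPattern_eq_biInter]
  exact .biInter K.countable_toSet fun c _ => measurableSet_setOf_mem_blockPasses_iff p τ c _

theorem dependsOn_passPattern (K P : Finset (Finset (Fin n))) :
    DependsOn (· ∈ passPattern p τ K P) {ρ | ρ \ τ ∈ K} := fun ω ω' h =>
  propext <| forall₂_congr fun c hc => (congrArg (· ↔ c ∈ P) <|
    dependsOn_blockPasses p τ c fun ρ (hρ : ρ \ τ = c) => h ρ (by simpa [hρ] using hc)).to_iff

theorem measure_passPattern (hp : ∀ i, p i ∈ Set.Icc (0 : ℝ) 1) {K P : Finset (Finset (Fin n))}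
    {j : ℕ} (hj : j ≠ 0) (hK : ∀ c ∈ K, #c = j ∧ Disjoint c τ) (hPK : P ⊆ K) :
    coinSpace n (passPattern p τ K P) =
      ENNReal.ofReal (passProb p #τ j ^ #P * (1 - passProb p #τ j) ^ (#K - #P)) := by
  have hblock : ∀ c ∈ K, coinSpace n {ω | ω ∈ blockPasses p τ c ↔ c ∈ P} =
      ENNReal.ofReal (if c ∈ P then passProb p #τ j else 1 - passProb p #τ j) := by
    intro c hc
    obtain ⟨rfl, hcτ⟩ := hK c hc
    have hpass := measure_blockPasses p τ hp (card_ne_zero.1 hj) hcτ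
    by_cases hcP : c ∈ P
    · simpa [hcP] using hpass
    · simp only [hcP, iff_false, if_false]
      rw [← Set.compl_ofPred, Set.ofPred_mem_eq,
        prob_compl_eq_one_sub (measurableSet_blockPasses ..),
        hpass, ENNReal.ofReal_sub _ (passProb_nonneg p hp _ _), ENNReal.ofReal_one]
  rw [passPattern_eq_biInter, coinSpace, measure_pi_biInter_of_dependsOn _ K
      (t := fun c => {ρ | ρ \ τ = c}) ?_ ?_ ?_, ← coinSpace, prod_congr rfl hblock,
    ← ENNReal.ofReal_prod_of_nonneg, prod_ite_mem_of_subset hPK]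
  · intro c _
    split_ifs
    · exact passProb_nonneg p hp _ _
    · linarith [passProb_le_one p hp #τ j]
  · exact fun c _ c' _ hne => Set.disjoint_left.2 fun ρ h h' => hne (h.symm.trans h')
  · exact fun c _ => measurableSet_setOf_mem_blockPasses_iff p τ c _
  · exact fun c _ ω ω' h => congrArg (· ↔ c ∈ P) (dependsOn_blockPasses p τ c h)

end RandomComplex

section Link

open Finset

variable {n : ℕ} (p : ℕ → ℝ) (τ : Finset (Fin n)) {ω : Finset (Fin n) → ℝ}

theorem mem_Xof_iff {σ : Finset (Fin n)} :
    σ ∈ Xof p ω ↔ σ.Nonempty ∧ ∀ ρ ⊆ σ, ρ.Nonempty → ω ρ ≤ p (#ρ - 1) := by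
  simp [Xof, nonempty_iff_ne_empty]

theorem mem_Xof_of_subset {σ σ' : Finset (Fin n)} (h : σ ⊆ σ') (hσ : σ.Nonempty)
    (hσ' : σ' ∈ Xof p ω) : σ ∈ Xof p ω := by
  rw [mem_Xof_iff] at hσ' ⊢
  exact ⟨hσ, fun ρ hρ => hσ'.2 ρ (hρ.trans h)⟩

theorem union_mem_Xof_iff {σ : Finset (Fin n)} (hne : (σ ∪ τ).Nonempty) :
    σ ∪ τ ∈ Xof p ω ↔ ∀ c ⊆ σ, ω ∈ blockPasses p τ c := by
  rw [mem_Xof_iff, and_iff_right hne]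
  constructor
  · rintro h c hc ρ hρ rfl
    exact h ρ (union_comm τ σ ▸ sdiff_le_iff.1 hc) hρ
  · exact fun h ρ hρ hρne => h (ρ \ τ) (sdiff_le_iff.2 (hρ.trans_eq (union_comm σ τ))) ρ hρne rfl

theorem setOf_imp_mem_Xof_eq : {ω | τ.Nonempty → τ ∈ Xof p ω} = blockPasses p τ ∅ := by
  ext ω
  rcases τ.eq_empty_or_nonempty with rfl | hτ
  · simp only [blockPasses, sdiff_empty, Set.mem_ofPred_eq, Finset.not_nonempty_empty,
      IsEmpty.forall_iff, true_iff]
    exact fun ρ hρ hρ₀ => (hρ.ne_empty hρ₀).elim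
  · simpa [hτ] using union_mem_Xof_iff p τ (σ := ∅) (by simpa using hτ)

theorem mem_link_iff {σ : Finset (Fin n)} :
    σ ∈ link (Xof p ω) τ ↔ σ.Nonempty ∧ Disjoint σ τ ∧ ∀ c ⊆ σ, ω ∈ blockPasses p τ c := by
  rw [link, mem_filter, ← disjoint_iff_inter_eq_empty]
  constructor
  · rintro ⟨hσ, hστ, hu⟩
    have hne := ((mem_Xof_iff p).1 hσ).1
    exact ⟨hne, hστ, (union_mem_Xof_iff p τ (hne.mono subset_union_left)).1 hu⟩
  · rintro ⟨hne, hστ, h⟩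
    have hu := (union_mem_Xof_iff p τ (hne.mono subset_union_left)).2 h
    exact ⟨mem_Xof_of_subset p subset_union_left hne hu, hστ, hu⟩

theorem mem_linkVerts_iff {v : Fin n} :
    v ∈ linkVerts (Xof p ω) τ ↔
      v ∉ τ ∧ ω ∈ blockPasses p τ ∅ ∧ ω ∈ blockPasses p τ {v} := by
  simp [linkVerts, mem_link_iff, subset_singleton_iff, or_imp, forall_and]

theorem linkVerts_subset_compl : linkVerts (Xof p ω) τ ⊆ τᶜ := fun _ hv =>
  mem_compl.2 ((mem_linkVerts_iff p τ).1 hv).1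

theorem mem_link_iff_of_card_eq_two {e : Finset (Fin n)} (he : #e = 2) :
    e ∈ link (Xof p ω) τ ↔ e ⊆ linkVerts (Xof p ω) τ ∧ ω ∈ blockPasses p τ e := by
  have hvert : ∀ v, v ∈ linkVerts (Xof p ω) τ ↔ {v} ∈ link (Xof p ω) τ := by simp [linkVerts]
  constructor
  · intro h
    obtain ⟨-, heτ, hpass⟩ := (mem_link_iff p τ).1 h
    refine ⟨fun v hv => (hvert v).2 ((mem_link_iff p τ).2 ⟨singleton_nonempty v,
      disjoint_singleton_left.2 (disjoint_left.1 heτ hv), fun c hc => hpass c (hc.trans ?_)⟩),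
      hpass e subset_rfl⟩
    exact singleton_subset_iff.2 hv
  · rintro ⟨hV, hpass⟩
    have hlink : ∀ v ∈ e, Disjoint {v} τ ∧ ∀ c ⊆ {v}, ω ∈ blockPasses p τ c := fun v hv =>
      ((mem_link_iff p τ).1 ((hvert v).1 (hV hv))).2
    refine (mem_link_iff p τ).2 ⟨card_pos.1 (by omega),
      disjoint_left.2 fun v hv => disjoint_singleton_left.1 (hlink v hv).1, fun c hc => ?_⟩
    rcases eq_or_ne c e with rfl | hce
    · exact hpass
    obtain ⟨v, hve, hcv⟩ : ∃ v ∈ e, c ⊆ {v} := by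
      have hc1 : #c ≤ 1 := by have := card_lt_card (ssubset_of_subset_of_ne hc hce); omega
      rcases c.eq_empty_or_nonempty with rfl | ⟨v, hv⟩
      · obtain ⟨v, hv⟩ := card_pos.1 (show 0 < #e by omega)
        exact ⟨v, hv, empty_subset _⟩
      · exact ⟨v, hc hv, fun u hu => mem_singleton.2 (card_le_one.1 hc1 u hu v hv)⟩
    exact (hlink v hve).2 c hcv

end Link

section LinkSkeleton

open Finset

variable {n : ℕ} (p : ℕ → ℝ) (τ : Finset (Fin n))

theorem setOf_linkVerts_eq {W : Finset (Fin n)} (hW : Disjoint W τ) :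
    {ω | τ.Nonempty → τ ∈ Xof p ω} ∩ {ω | linkVerts (Xof p ω) τ = W} =
      blockPasses p τ ∅ ∩ passPattern p τ (τᶜ.powersetCard 1) (W.powersetCard 1) := by
  rw [setOf_imp_mem_Xof_eq]
  ext ω
  simp only [Set.mem_inter_iff, Set.mem_ofPred_eq, passPattern, powersetCard_one, forall_mem_map,
    Function.Embedding.coeFn_mk]
  refine and_congr_right fun h₀ => ?_
  rw [Finset.ext_iff]
  refine forall_congr' fun v => ?_
  by_cases hv : v ∈ τ
  · simp [hv, mem_linkVerts_iff, disjoint_right.1 hW hv]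
  · simp [hv, mem_linkVerts_iff, h₀]

theorem setOf_linkSkeleton_eq {W : Finset (Fin n)} {F : Finset (Finset (Fin n))}
    (hF : ∀ e ∈ F, #e = 2 ∧ e ⊆ W) :
    {ω | τ.Nonempty → τ ∈ Xof p ω} ∩ {ω | linkVerts (Xof p ω) τ = W ∧
        univ.filter (fun e => #e = 2 ∧ e ∈ link (Xof p ω) τ) = F} =
      {ω | τ.Nonempty → τ ∈ Xof p ω} ∩ {ω | linkVerts (Xof p ω) τ = W} ∩
        passPattern p τ (W.powersetCard 2) F := by
  classical
  ext ω
  simp only [Set.mem_inter_iff, Set.mem_ofPred_eq, and_assoc]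
  refine and_congr_right fun _ => and_congr_right fun hV => ?_
  have hedges : univ.filter (fun e => #e = 2 ∧ e ∈ link (Xof p ω) τ) =
      (W.powersetCard 2).filter (ω ∈ blockPasses p τ ·) := by
    ext e
    simp only [mem_filter, mem_univ, true_and, mem_powersetCard]
    constructor
    · rintro ⟨he, hlink⟩
      obtain ⟨h₁, h₂⟩ := (mem_link_iff_of_card_eq_two p τ he).1 hlink
      exact ⟨⟨hV ▸ h₁, he⟩, h₂⟩
    · rintro ⟨⟨h₁, he⟩, h₂⟩
      exact ⟨he, (mem_link_iff_of_card_eq_two p τ he).2 ⟨hV ▸ h₁, h₂⟩⟩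
  rw [hedges, filter_eq_iff_of_subset fun e he => mem_powersetCard.2 (hF e he).symm]
  rfl

theorem measurableSet_inter_linkVerts_eq {W : Finset (Fin n)} (hW : Disjoint W τ) :
    MeasurableSet ({ω | τ.Nonempty → τ ∈ Xof p ω} ∩ {ω | linkVerts (Xof p ω) τ = W}) := by
  rw [setOf_linkVerts_eq p τ hW]
  exact (measurableSet_blockPasses p τ ∅).inter (measurableSet_passPattern ..)

theorem measure_inter_linkVerts_eq (hp : ∀ i, p i ∈ Set.Icc (0 : ℝ) 1) {W : Finset (Fin n)}
    (hW : Disjoint W τ) :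
    coinSpace n ({ω | τ.Nonempty → τ ∈ Xof p ω} ∩ {ω | linkVerts (Xof p ω) τ = W}) =
      coinSpace n {ω | τ.Nonempty → τ ∈ Xof p ω} * ENNReal.ofReal
        (passProb p #τ 1 ^ #W * (1 - passProb p #τ 1) ^ (n - #τ - #W)) := by
  rw [setOf_linkVerts_eq p τ hW, coinSpace, measure_pi_inter_of_dependsOn (s := {ρ | ρ \ τ = ∅}) _
      (measurableSet_blockPasses p τ ∅) (measurableSet_passPattern ..)
      (dependsOn_blockPasses p τ ∅) ((dependsOn_passPattern ..).mono ?_), ← coinSpace,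
    setOf_imp_mem_Xof_eq, measure_passPattern p τ hp one_ne_zero ?_
      (powersetCard_mono (subset_compl_iff_disjoint_right.2 hW)),
    card_powersetCard, card_powersetCard, Nat.choose_one_right, Nat.choose_one_right, card_compl,
    Fintype.card_fin]
  · intro c hc
    rw [mem_powersetCard, subset_compl_iff_disjoint_right] at hc
    exact hc.symm
  · intro ρ (hρ : ρ \ τ ∈ τᶜ.powersetCard 1) (h₀ : ρ \ τ = ∅)
    simp [h₀] at hρ

theorem measure_inter_linkSkeleton_eq (hp : ∀ i, p i ∈ Set.Icc (0 : ℝ) 1) {W : Finset (Fin n)}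
    (hW : Disjoint W τ) {F : Finset (Finset (Fin n))} (hF : ∀ e ∈ F, #e = 2 ∧ e ⊆ W) :
    coinSpace n ({ω | τ.Nonempty → τ ∈ Xof p ω} ∩ {ω | linkVerts (Xof p ω) τ = W ∧
        univ.filter (fun e => #e = 2 ∧ e ∈ link (Xof p ω) τ) = F}) =
      coinSpace n {ω | τ.Nonempty → τ ∈ Xof p ω} * ENNReal.ofReal
        (passProb p #τ 1 ^ #W * (1 - passProb p #τ 1) ^ (n - #τ - #W) *
          (passProb p #τ 2 ^ #F * (1 - passProb p #τ 2) ^ ((#W).choose 2 - #F))) := by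
  have hverts : DependsOn (· ∈ {ω | τ.Nonempty → τ ∈ Xof p ω} ∩
      {ω | linkVerts (Xof p ω) τ = W}) {ρ | #(ρ \ τ) ≤ 1} := by
    rw [setOf_linkVerts_eq p τ hW]
    refine dependsOn_mem_inter ((dependsOn_blockPasses ..).mono fun ρ (hρ : ρ \ τ = ∅) => ?_)
      ((dependsOn_passPattern ..).mono fun ρ (hρ : ρ \ τ ∈ τᶜ.powersetCard 1) => ?_)
    · simp [Set.mem_ofPred_eq, hρ]
    · exact (mem_powersetCard.1 hρ).2.le
  have hedges : DependsOn (· ∈ passPattern p τ (W.powersetCard 2) F) {ρ | #(ρ \ τ) ≤ 1}ᶜ :=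
    (dependsOn_passPattern ..).mono fun ρ (hρ : ρ \ τ ∈ W.powersetCard 2) => by
      simp [(mem_powersetCard.1 hρ).2]
  have hK : ∀ c ∈ W.powersetCard 2, #c = 2 ∧ Disjoint c τ := fun c hc =>
    ⟨(mem_powersetCard.1 hc).2, disjoint_of_subset_left (mem_powersetCard.1 hc).1 hW⟩
  rw [setOf_linkSkeleton_eq p τ hF, coinSpace, measure_pi_inter_of_dependsOn _
      (measurableSet_inter_linkVerts_eq p τ hW) (measurableSet_passPattern ..) hverts hedges,
    ← coinSpace, measure_inter_linkVerts_eq p τ hp hW, measure_passPattern p τ hp two_ne_zero hK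
      fun e he => mem_powersetCard.2 (hF e he).symm, card_powersetCard, mul_assoc,
    ← ENNReal.ofReal_mul (mul_nonneg (pow_nonneg (passProb_nonneg p hp _ _) _)
      (pow_nonneg (sub_nonneg.2 (passProb_le_one p hp _ _)) _))]

theorem measure_inter_card_linkVerts_eq (hp : ∀ i, p i ∈ Set.Icc (0 : ℝ) 1) (m : ℕ) :
    coinSpace n ({ω | τ.Nonempty → τ ∈ Xof p ω} ∩ {ω | #(linkVerts (Xof p ω) τ) = m}) =
      coinSpace n {ω | τ.Nonempty → τ ∈ Xof p ω} * ENNReal.ofReal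
        ((n - #τ).choose m * (passProb p #τ 1 ^ m * (1 - passProb p #τ 1) ^ (n - #τ - m))) := by
  have hdisj : ∀ W ∈ τᶜ.powersetCard m, Disjoint W τ := fun W hW =>
    subset_compl_iff_disjoint_right.1 (mem_powersetCard.1 hW).1
  have hunion : {ω | τ.Nonempty → τ ∈ Xof p ω} ∩ {ω | #(linkVerts (Xof p ω) τ) = m} =
      ⋃ W ∈ τᶜ.powersetCard m,
        {ω | τ.Nonempty → τ ∈ Xof p ω} ∩ {ω | linkVerts (Xof p ω) τ = W} := by
    ext ω
    simp only [Set.mem_inter_iff, Set.mem_ofPred_eq, Set.mem_iUnion, exists_prop]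
    constructor
    · rintro ⟨hA, hm⟩
      exact ⟨_, mem_powersetCard.2 ⟨linkVerts_subset_compl p τ, hm⟩, hA, rfl⟩
    · rintro ⟨W, hW, hA, rfl⟩
      exact ⟨hA, (mem_powersetCard.1 hW).2⟩
  rw [hunion, measure_biUnion_finset
      (fun W _ W' _ hne => Set.disjoint_left.2 fun ω h h' => hne (h.2.symm.trans h'.2))
      fun W hW => measurableSet_inter_linkVerts_eq p τ (hdisj W hW),
    sum_congr rfl fun W hW => by
      rw [measure_inter_linkVerts_eq p τ hp (hdisj W hW), (mem_powersetCard.1 hW).2],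
    sum_const, card_powersetCard, card_compl, Fintype.card_fin, nsmul_eq_mul,
    ENNReal.ofReal_mul (Nat.cast_nonneg _), ENNReal.ofReal_natCast]
  ring

end LinkSkeleton

section Parameters

open Finset

variable (p : ℕ → ℝ) (k : ℕ)

theorem passProb_one : passProb p k 1 = rPrev p k := by
  simp [passProb, rPrev]

theorem rPrev_mul_passProb_two : rPrev p k * passProb p k 2 = rCur p k := by
  have hPascal : ∀ i, p (i + 1) ^ (k + 1).choose (i + 1) =
      p (i + 1) ^ k.choose i * p (i + 1) ^ k.choose (i + 1) := fun i => by
    rw [← pow_add, Nat.choose_succ_succ]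
  rw [rCur, prod_range_succ', prod_congr rfl fun i _ => hPascal i, prod_mul_distrib, rPrev,
    prod_range_succ', prod_range_succ (fun i => p (i + 1) ^ k.choose (i + 1)) k,
    Nat.choose_succ_self, pow_zero, mul_one, passProb]
  simp only [Nat.choose_zero_right, pow_one, show ∀ i, i + 2 - 1 = i + 1 from fun _ => rfl]
  ring

theorem passProb_two_eq_div (h : rPrev p k ≠ 0) : passProb p k 2 = rCur p k / rPrev p k := by
  rw [eq_div_iff h, mul_comm, rPrev_mul_passProb_two]

/-- `rCur / rPrev` is a junk value when `rPrev = 0`, but then both sides vanish unless `W = ∅`,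
and then `F = ∅`. -/
theorem rPrev_pow_mul_passProb_two_pow {n : ℕ} {W : Finset (Fin n)}
    {F : Finset (Finset (Fin n))} (hF : ∀ e ∈ F, #e = 2 ∧ e ⊆ W) (b : ℕ) :
    rPrev p k ^ #W * (1 - rPrev p k) ^ b *
        (passProb p k 2 ^ #F * (1 - passProb p k 2) ^ ((#W).choose 2 - #F)) =
      rPrev p k ^ #W * (1 - rPrev p k) ^ b * (rCur p k / rPrev p k) ^ #F *
        (1 - rCur p k / rPrev p k) ^ ((#W).choose 2 - #F) := by
  rcases ne_or_eq (rPrev p k) 0 with hr | hr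
  · rw [passProb_two_eq_div p k hr]
    ring
  rcases W.eq_empty_or_nonempty with rfl | hW
  · obtain rfl : F = ∅ := eq_empty_of_forall_notMem fun e he => by
      simpa [subset_empty.1 (hF e he).2] using (hF e he).1
    simp
  · simp [hr, zero_pow (card_ne_zero.2 hW)]

end Parameters

open Classical in
theorem statement16_general (n k : ℕ) (p : ℕ → ℝ)
    (hp : ∀ i, p i ∈ Set.Icc (0 : ℝ) 1)
    (τ : Finset (Fin n)) (hτ : τ.card = k)
    (hpos : coinSpace n {ω | τ.Nonempty → τ ∈ Xof p ω} ≠ 0) :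
    (∀ W : Finset (Fin n), W ∩ τ = ∅ →
      ∀ F : Finset (Finset (Fin n)), (∀ e ∈ F, e.card = 2 ∧ e ⊆ W) →
        ProbabilityTheory.cond (coinSpace n) {ω | τ.Nonempty → τ ∈ Xof p ω}
            {ω | linkVerts (Xof p ω) τ = W ∧
              (Finset.univ.filter fun e : Finset (Fin n) =>
                e.card = 2 ∧ e ∈ link (Xof p ω) τ) = F}
          = ENNReal.ofReal
              (rPrev p k ^ W.card * (1 - rPrev p k) ^ (n - k - W.card) *
                (rCur p k / rPrev p k) ^ F.card *
                (1 - rCur p k / rPrev p k) ^ (W.card.choose 2 - F.card))) ∧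
    ∀ m : ℕ,
      ProbabilityTheory.cond (coinSpace n) {ω | τ.Nonempty → τ ∈ Xof p ω}
          {ω | (linkVerts (Xof p ω) τ).card = m}
        = ENNReal.ofReal
            (((n - k).choose m : ℝ) * rPrev p k ^ m * (1 - rPrev p k) ^ (n - k - m)) := by
  subst hτ
  have hA : MeasurableSet {ω : Finset (Fin n) → ℝ | τ.Nonempty → τ ∈ Xof p ω} :=
    setOf_imp_mem_Xof_eq p τ ▸ measurableSet_blockPasses p τ ∅
  have hfin := measure_ne_top (coinSpace n) {ω | τ.Nonempty → τ ∈ Xof p ω}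
  refine ⟨fun W hW F hF => ?_, fun m => ?_⟩
  · rw [ProbabilityTheory.cond_apply hA,
      measure_inter_linkSkeleton_eq p τ hp (Finset.disjoint_iff_inter_eq_empty.2 hW) hF,
      ENNReal.inv_mul_cancel_left hpos hfin, passProb_one, rPrev_pow_mul_passProb_two_pow p _ hF]
  · rw [ProbabilityTheory.cond_apply hA, measure_inter_card_linkVerts_eq p τ hp,
      ENNReal.inv_mul_cancel_left hpos hfin, passProb_one, mul_assoc]

open Classical in
/-- Let `X ~ X(n, 𝐩)`, `0 ≤ k ≤ n − 2`, and let `τ` be a set of `k`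
vertices with `P(τ ∈ X) > 0`.  Conditionally on `{τ ∈ X}` (a full event when `τ = ∅`), the
`1`-skeleton of `lk_X(τ)` is distributed as `X(n−k, (r_{k−1}, r_k/r_{k−1}, 0, …, 0))`: for every
candidate vertex set `W` and edge set `F`,
`P(vertices = W, edges = F | τ ∈ X)
  = r_{k−1}^{#W} (1−r_{k−1})^{(n−k)−#W} (r_k/r_{k−1})^{#F} (1−r_k/r_{k−1})^{C(#W,2)−#F}`;
in particular the number of vertices of `lk_X(τ)` is `Bin(n−k, r_{k−1})`-distributed. -/
theorem statement16 (n k : ℕ) (hk : k ≤ n - 2) (p : ℕ → ℝ)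
    (hp : ∀ i, p i ∈ Set.Icc (0 : ℝ) 1)
    (τ : Finset (Fin n)) (hτ : τ.card = k)
    (hpos : coinSpace n {ω | τ.Nonempty → τ ∈ Xof p ω} ≠ 0) :
    (∀ W : Finset (Fin n), W ∩ τ = ∅ →
      ∀ F : Finset (Finset (Fin n)), (∀ e ∈ F, e.card = 2 ∧ e ⊆ W) →
        ProbabilityTheory.cond (coinSpace n) {ω | τ.Nonempty → τ ∈ Xof p ω}
            {ω | linkVerts (Xof p ω) τ = W ∧
              (Finset.univ.filter fun e : Finset (Fin n) =>
                e.card = 2 ∧ e ∈ link (Xof p ω) τ) = F}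
          = ENNReal.ofReal
              (rPrev p k ^ W.card * (1 - rPrev p k) ^ (n - k - W.card) *
                (rCur p k / rPrev p k) ^ F.card *
                (1 - rCur p k / rPrev p k) ^ (W.card.choose 2 - F.card))) ∧
    ∀ m : ℕ,
      ProbabilityTheory.cond (coinSpace n) {ω | τ.Nonempty → τ ∈ Xof p ω}
          {ω | (linkVerts (Xof p ω) τ).card = m}
        = ENNReal.ofReal
            (((n - k).choose m : ℝ) * rPrev p k ^ m * (1 - rPrev p k) ^ (n - k - m)) :=
  statement16_general n k p hp τ hτ hpos
end

section
/- Let k ≥ 0 and let X(n, 𝐩(·)) define a multi-parameter random complex process with q_k(t) = Π_{i=0}^k p_i(t)^{C(k+1,i+1)} and r_k(t) = q_{k+1}(t)/q_k(t). If Φ_k(u) = Ψ_k(u) for all u ∈ [0,1), where Φ_k(u) = ∫_0^{ř_k(u)} q_k(s) ds, Ψ_k(u) = ∫_0^{ř_{k−1}(u)} q_k(s) ds, and ř_j is the generalized right-continuous inverse of r_j, then for every t ≥ 0, either q_k(t) = 0 or p_i(t) = 1 for all i = 1, …, k+1; consequently β_k(X_n(t)) = 0 almost surely for every t, and the k-th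 lifetime sum L_k(𝒳_n) = 0 almost surely. -/
open scoped BigOperators

open MeasureTheory
open scoped ENNReal

/-- `q_k(t) = Π_{i=0}^{k} p_i(t)^{C(k+1,i+1)}`. -/
noncomputable def qFun (p : ℕ → ℝ → ℝ) (k : ℕ) (t : ℝ) : ℝ :=
  ∏ i ∈ Finset.range (k + 1), p i t ^ ((k + 1).choose (i + 1))

/-- `r_{k−1}(t) = Π_{i=0}^{k} p_i(t)^{C(k,i)}`. -/
noncomputable def rPrevFun (p : ℕ → ℝ → ℝ) (k : ℕ) (t : ℝ) : ℝ :=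
  ∏ i ∈ Finset.range (k + 1), p i t ^ (k.choose i)

/-- `r_k(t) = Π_{i=0}^{k+1} p_i(t)^{C(k+1,i)}`. -/
noncomputable def rCurFun (p : ℕ → ℝ → ℝ) (k : ℕ) (t : ℝ) : ℝ :=
  ∏ i ∈ Finset.range (k + 2), p i t ^ ((k + 1).choose i)

/-- The generalized (right-continuous) inverse `ř(u) = inf {t ≥ 0 : f(t) > u}`, valued in
`ℝ≥0∞` so that it is `∞` when `f` never exceeds `u`. -/
noncomputable def genInv (f : ℝ → ℝ) (u : ℝ) : ℝ≥0∞ :=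
  sInf {x : ℝ≥0∞ | ∃ s : ℝ, x = ENNReal.ofReal s ∧ 0 ≤ s ∧ u < f s}

/-- `Φ`-type integral: `∫_0^{ř_f(u)} g(s) ds`. -/
noncomputable def phiInt (f g : ℝ → ℝ) (u : ℝ) : ℝ≥0∞ :=
  ∫⁻ s in {s : ℝ | 0 ≤ s ∧ ENNReal.ofReal s < genInv f u}, ENNReal.ofReal (g s)

/-- The law of the multi-parameter random complex process: each simplex `σ` carries an
independent appearance time with distribution function `p (dim σ)`. -/
noncomputable def procMeasure (n : ℕ) (p : ℕ → StieltjesFunction ℝ) :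
    Measure (Finset (Fin n) → ℝ) :=
  Measure.pi fun σ => (p (σ.card - 1)).measure

open Classical in
/-- The complex at time `t`: the simplices all of whose nonempty faces have appeared by
time `t`. -/
noncomputable def XprocAt {n : ℕ} (ω : Finset (Fin n) → ℝ) (t : ℝ) :
    Finset (Finset (Fin n)) :=
  Finset.univ.filter fun σ => σ ≠ ∅ ∧ ∀ ρ ∈ σ.powerset, ρ ≠ ∅ → ω ρ ≤ t

/-!
If `q_k(t) > 0` while `p_i(t) < 1` for some `1 ≤ i ≤ k+1`, then `r_k(t) < r_{k-1}(t)`. For `u`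
strictly between the two values, right continuity of `r_k` gives `ř_{k-1}(u) ≤ t < t' ≤ ř_k(u)`,
so `Φ_k(u) - Ψ_k(u) ≥ ∫_t^{t'} q_k > 0`, contradicting `Φ_k = Ψ_k`.

If `q_k(t) = 0`, some `p_i(t)` with `i ≤ k` vanishes, so almost surely no `i`-simplex, hence no
`k`-simplex, is present at time `t`. Otherwise almost surely every simplex of dimension
`1, …, k+1` spanned by the vertices present at time `t` has appeared, and coning off a vertex
shows that every `k`-cycle is a boundary. The lifetime sum then vanishes by Fubini.
-/

open Finset

section SimplexBoundary

variable {α : Type*} [LinearOrder α]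

/-- `(-1) ^ numBelow a s` is the sign of the face `s \ {a}` in the boundary of `s`. -/
def numBelow (a : α) (s : Finset α) : ℕ := #{w ∈ s | w < a}

lemma numBelow_insert_self (a : α) (s : Finset α) : numBelow a (insert a s) = numBelow a s := by
  simp [numBelow, filter_insert]

lemma numBelow_insert {a b : α} {s : Finset α} (hb : b ∉ s) :
    numBelow a (insert b s) = numBelow a s + if b < a then 1 else 0 := by
  unfold numBelow
  split_ifs with h
  · rw [filter_insert, if_pos h, card_insert_of_notMem (fun hm => hb (mem_filter.1 hm).1)]
  · rw [filter_insert, if_neg h, add_zero]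

lemma numBelow_insert_add_numBelow_insert {a b : α} {s : Finset α} (hab : a ≠ b) (ha : a ∉ s)
    (hb : b ∉ s) :
    numBelow a (insert b s) + numBelow b (insert a s) = numBelow a s + numBelow b s + 1 := by
  rw [numBelow_insert hb, numBelow_insert ha]
  rcases hab.lt_or_gt with h | h <;> simp [h, h.not_gt] <;> omega

/-- The boundary `∂f` at `σ` in the chain complex of the full simplex on `V`, chains being
functions on finsets. -/
def simplexBdry (V : Finset α) (f : Finset α → ℝ) (σ : Finset α) : ℝ :=
  ∑ a ∈ V \ σ, (-1) ^ numBelow a σ * f (insert a σ)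

def cone (v : α) (f : Finset α → ℝ) (σ : Finset α) : ℝ :=
  if v ∈ σ then (-1) ^ numBelow v σ * f (σ.erase v) else 0

lemma simplexBdry_cone_of_notMem {V : Finset α} {v : α} (hv : v ∈ V) (f : Finset α → ℝ)
    {σ : Finset α} (hvσ : v ∉ σ) : simplexBdry V (cone v f) σ = f σ := by
  unfold simplexBdry
  rw [sum_eq_single_of_mem v (mem_sdiff.2 ⟨hv, hvσ⟩) fun a _ hav => by
    simp [cone, hav.symm, hvσ]]
  rw [cone, if_pos (mem_insert_self v σ), erase_insert hvσ, numBelow_insert_self, ← mul_assoc,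
    ← mul_pow]
  norm_num

lemma simplexBdry_cone_insert {V : Finset α} {v : α} (hv : v ∈ V) (f : Finset α → ℝ)
    {s : Finset α} (hvs : v ∉ s) :
    simplexBdry V (cone v f) (insert v s) =
      f (insert v s) - (-1) ^ numBelow v s * simplexBdry V f s := by
  have hV : V \ s = insert v (V \ insert v s) := by
    ext a; by_cases a = v <;> aesop
  have hterm : ∀ a ∈ V \ insert v s,
      (-1) ^ numBelow a (insert v s) * cone v f (insert a (insert v s)) =
        -((-1) ^ numBelow v s * ((-1) ^ numBelow a s * f (insert a s))) := by
    intro a ha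
    obtain ⟨hav, has⟩ : a ≠ v ∧ a ∉ s := by simpa using (mem_sdiff.1 ha).2
    rw [cone, if_pos (mem_insert_of_mem (mem_insert_self v s)), erase_insert_of_ne hav,
      erase_insert hvs, insert_comm, numBelow_insert_self, ← mul_assoc, ← pow_add,
      numBelow_insert_add_numBelow_insert hav has hvs]
    ring
  have hsq : ((-1 : ℝ) ^ numBelow v s) * (-1) ^ numBelow v s = 1 := by
    rw [← mul_pow]; norm_num
  unfold simplexBdry
  rw [sum_congr rfl hterm, hV, sum_insert (by simp), sum_neg_distrib, ← mul_sum]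
  linear_combination f (insert v s) * hsq

lemma simplexBdry_cone_add_cone_simplexBdry {V : Finset α} {v : α} (hv : v ∈ V)
    (f : Finset α → ℝ) (σ : Finset α) :
    simplexBdry V (cone v f) σ + cone v (simplexBdry V f) σ = f σ := by
  by_cases hvσ : v ∈ σ
  · obtain ⟨s, hvs, rfl⟩ : ∃ s, v ∉ s ∧ insert v s = σ :=
      ⟨σ.erase v, notMem_erase v σ, insert_erase hvσ⟩
    rw [simplexBdry_cone_insert hv f hvs, cone, if_pos (mem_insert_self v s), erase_insert hvs,
      numBelow_insert_self]
    ring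
  · rw [simplexBdry_cone_of_notMem hv f hvσ, cone, if_neg hvσ, add_zero]

end SimplexBoundary

section CompleteSkeleton

variable {n : ℕ}

/-- `m` counts vertices: `HasCompleteSkeleton X V (k + 2)` says that `X` contains the complete
`(k+1)`-skeleton of the simplex on `V` and no other simplex of dimension at most `k + 1`. -/
def HasCompleteSkeleton (X : Finset (Finset (Fin n))) (V : Finset (Fin n)) (m : ℕ) : Prop :=
  ∀ s : Finset (Fin n), s ≠ ∅ → #s ≤ m → (s ∈ X ↔ s ⊆ V)

lemma betti_eq_zero_of_ker_le_range (X : Finset (Finset (Fin n))) (k : ℕ)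
    (h : LinearMap.ker (bdry X k) ≤ LinearMap.range (bdry X (k + 1))) : betti X k = 0 :=
  Nat.sub_eq_zero_of_le (Submodule.finrank_mono h)

lemma betti_eq_zero_of_faces_eq_empty {X : Finset (Finset (Fin n))} {k : ℕ}
    (h : faces X (k + 1) = ∅) : betti X k = 0 := by
  have : IsEmpty (faces X (k + 1)) := by rw [h]; infer_instance
  refine betti_eq_zero_of_ker_le_range X k fun z _ => ?_
  rw [Subsingleton.elim z 0]
  exact zero_mem _

variable {X : Finset (Finset (Fin n))} {V : Finset (Fin n)} {m : ℕ}

lemma HasCompleteSkeleton.mem_faces_iff (hX : HasCompleteSkeleton X V m) {j : ℕ} (hj : j ≤ m)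
    {s : Finset (Fin n)} : s ∈ faces X j ↔ #s = j ∧ s ⊆ V := by
  rcases eq_or_ne s ∅ with rfl | hs
  · simp [faces]
  · simp only [faces, mem_filter, mem_insert, hs, false_or]
    exact ⟨fun h => ⟨h.2, (hX s hs (h.2 ▸ hj)).1 h.1⟩,
      fun h => ⟨(hX s hs (h.1 ▸ hj)).2 h.2, h.1⟩⟩

lemma HasCompleteSkeleton.filter_faces_superset (hX : HasCompleteSkeleton X V m) {j : ℕ}
    (hj : j + 1 ≤ m) {σ : Finset (Fin n)} (hσ : σ ∈ faces X j) :
    {τ ∈ faces X (j + 1) | σ ⊆ τ} = (V \ σ).image (insert · σ) := by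
  obtain ⟨hσj, hσV⟩ := (hX.mem_faces_iff (by omega)).1 hσ
  ext τ
  rw [mem_filter, hX.mem_faces_iff hj, mem_image]
  constructor
  · rintro ⟨⟨hτj, hτV⟩, hστ⟩
    obtain ⟨a, haσ, rfl⟩ := exists_eq_insert_iff.2 ⟨hστ, by omega⟩
    exact ⟨a, mem_sdiff.2 ⟨hτV (mem_insert_self a σ), haσ⟩, rfl⟩
  · rintro ⟨a, ha, rfl⟩
    obtain ⟨haV, haσ⟩ := mem_sdiff.1 ha
    exact ⟨⟨by rw [card_insert_of_notMem haσ, hσj], insert_subset haV hσV⟩, subset_insert a σ⟩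

lemma HasCompleteSkeleton.bdry_apply (hX : HasCompleteSkeleton X V m) {j : ℕ} (hj : j + 1 ≤ m)
    (f : Finset (Fin n) → ℝ) (σ : faces X j) :
    bdry X j (fun τ => f τ.1) σ = simplexBdry V f σ.1 := by
  have hsign : ∀ a ∉ σ.1, ∑ v ∈ insert a σ.1 \ σ.1, numBelow v (insert a σ.1) = numBelow a σ.1 :=
    fun a ha => by rw [insert_sdiff_cancel ha, sum_singleton, numBelow_insert_self]
  rw [bdry, Matrix.mulVecLin_apply, Matrix.mulVec, dotProduct]
  simp only [bdryMat]
  rw [sum_coe_sort (faces X (j + 1)) fun τ => (if σ.1 ⊆ τ then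
      (-1 : ℝ) ^ ∑ v ∈ τ \ σ.1, #{w ∈ τ | w < v} else 0) * f τ]
  simp only [ite_mul, zero_mul]
  rw [← sum_filter, hX.filter_faces_superset hj σ.2, sum_image fun a ha b _ hab => ?_, simplexBdry]
  · exact sum_congr rfl fun a ha => by rw [← hsign a (mem_sdiff.1 ha).2]; rfl
  · have : a ∈ insert b σ.1 := hab ▸ mem_insert_self a σ.1
    exact (mem_insert.1 this).resolve_right (mem_sdiff.1 ha).2

lemma HasCompleteSkeleton.betti_eq_zero {k : ℕ} (hX : HasCompleteSkeleton X V (k + 2)) :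
    betti X k = 0 := by
  rcases V.eq_empty_or_nonempty with rfl | ⟨v, hv⟩
  · refine betti_eq_zero_of_faces_eq_empty (eq_empty_iff_forall_notMem.2 fun s hs => ?_)
    obtain ⟨hs, hsV⟩ := (hX.mem_faces_iff (by omega)).1 hs
    simp [subset_empty.1 hsV] at hs
  refine betti_eq_zero_of_ker_le_range X k fun z hz => ?_
  set f : Finset (Fin n) → ℝ := fun s => if h : s ∈ faces X (k + 1) then z ⟨s, h⟩ else 0
  have hzf : z = fun τ => f τ.1 := funext fun τ => by simp [f, τ.2]
  have hcycle : ∀ s ∈ faces X k, simplexBdry V f s = 0 := fun s hs => by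
    rw [← hX.bdry_apply (by omega) f ⟨s, hs⟩, ← hzf]
    exact congrFun (LinearMap.mem_ker.1 hz) _
  have hcone : ∀ σ ∈ faces X (k + 1), cone v (simplexBdry V f) σ = 0 := fun σ hσ => by
    obtain ⟨hσk, hσV⟩ := (hX.mem_faces_iff (by omega)).1 hσ
    unfold cone
    split_ifs with hvσ
    · rw [hcycle _ ((hX.mem_faces_iff (by omega)).2 ⟨by rw [card_erase_of_mem hvσ, hσk]; rfl,
        (erase_subset v σ).trans hσV⟩), mul_zero]
    · rfl
  refine ⟨fun τ => cone v f τ.1, funext fun σ => ?_⟩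
  rw [hX.bdry_apply (by omega), hzf]
  linarith [simplexBdry_cone_add_cone_simplexBdry hv f σ.1, hcone σ.1 σ.2]

end CompleteSkeleton

section GeneralizedInverse

lemma genInv_le_ofReal {f : ℝ → ℝ} {u t : ℝ} (ht : 0 ≤ t) (h : u < f t) :
    genInv f u ≤ ENNReal.ofReal t :=
  sInf_le ⟨t, rfl, ht, h⟩

lemma ofReal_le_genInv {f : ℝ → ℝ} {u c : ℝ} (h : ∀ s, 0 ≤ s → u < f s → c ≤ s) :
    ENNReal.ofReal c ≤ genInv f u :=
  le_sInf fun _ ⟨s, hx, hs, hus⟩ => hx ▸ ENNReal.ofReal_le_ofReal (h s hs hus)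

lemma setOf_ofReal_lt_ofReal (t : ℝ) :
    {s : ℝ | 0 ≤ s ∧ ENNReal.ofReal s < ENNReal.ofReal t} = Set.Ico 0 t := by
  ext s
  simp only [Set.mem_ofPred_eq, Set.mem_Ico, ENNReal.ofReal_lt_ofReal_iff']
  exact ⟨fun h => ⟨h.1, h.2.1⟩, fun h => ⟨h.1, h.2, h.1.trans_lt h.2⟩⟩

lemma phiInt_le_of_genInv_le {f g : ℝ → ℝ} {u t : ℝ} (h : genInv f u ≤ ENNReal.ofReal t) :
    phiInt f g u ≤ ∫⁻ s in Set.Ico 0 t, ENNReal.ofReal (g s) := by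
  rw [← setOf_ofReal_lt_ofReal]
  exact lintegral_mono_set fun s hs => ⟨hs.1, hs.2.trans_le h⟩

lemma le_phiInt_of_le_genInv {f g : ℝ → ℝ} {u t : ℝ} (h : ENNReal.ofReal t ≤ genInv f u) :
    ∫⁻ s in Set.Ico 0 t, ENNReal.ofReal (g s) ≤ phiInt f g u := by
  rw [← setOf_ofReal_lt_ofReal]
  exact lintegral_mono_set fun s hs => ⟨hs.1, hs.2.trans_le h⟩

/-- If `u` separates `f₁ t < f₂ t`, right continuity keeps `f₁` below `u` on some `[t, t')`, so
`ř_{f₂}(u) ≤ t < t' ≤ ř_{f₁}(u)`, and `g` has positive mass on `[t, t')`. -/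
lemma phiInt_lt_phiInt {f₁ f₂ g : ℝ → ℝ} {t u : ℝ} (hf₁ : Monotone f₁)
    (hf₁t : ContinuousWithinAt f₁ (Set.Ici t) t) (hg : Monotone g) (ht : 0 ≤ t) (hgt : 0 < g t)
    (h₁ : f₁ t < u) (h₂ : u < f₂ t) : phiInt f₂ g u < phiInt f₁ g u := by
  obtain ⟨t', htt', hsub⟩ := (nhdsGE_basis_of_exists_gt ⟨t + 1, lt_add_one t⟩).mem_iff.1
    (hf₁t (Iio_mem_nhds h₁))
  have hf₁u : ∀ s < t', f₁ s < u := fun s hs => by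
    rcases lt_or_ge s t with hst | hst
    exacts [(hf₁ hst.le).trans_lt h₁, hsub ⟨hst, hs⟩]
  have hfin : ∫⁻ s in Set.Ico 0 t, ENNReal.ofReal (g s) ≠ ⊤ := by
    refine ne_top_of_le_ne_top (b := ENNReal.ofReal (g t) * volume (Set.Ico 0 t))
      (by simp [ENNReal.mul_eq_top]) ?_
    rw [← setLIntegral_const]
    exact setLIntegral_mono measurable_const fun s hs => ENNReal.ofReal_le_ofReal (hg hs.2.le)
  have hpos : ∫⁻ s in Set.Ico t t', ENNReal.ofReal (g s) ≠ 0 := by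
    refine (lt_of_lt_of_le ?_ (?_ : ENNReal.ofReal (g t) * volume (Set.Ico t t') ≤ _)).ne'
    · simp [hgt, htt']
    · rw [← setLIntegral_const]
      exact setLIntegral_mono (ENNReal.measurable_ofReal.comp hg.measurable)
        fun s hs => ENNReal.ofReal_le_ofReal (hg hs.1)
  calc phiInt f₂ g u
      ≤ ∫⁻ s in Set.Ico 0 t, ENNReal.ofReal (g s) :=
        phiInt_le_of_genInv_le (genInv_le_ofReal ht h₂)
    _ < (∫⁻ s in Set.Ico 0 t, ENNReal.ofReal (g s)) + ∫⁻ s in Set.Ico t t', ENNReal.ofReal (g s) :=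
        ENNReal.lt_add_right hfin hpos
    _ = ∫⁻ s in Set.Ico 0 t', ENNReal.ofReal (g s) := by
        rw [← lintegral_union measurableSet_Ico Set.Ico_disjoint_Ico_same,
          Set.Ico_union_Ico_eq_Ico ht htt'.le]
    _ ≤ phiInt f₁ g u :=
        le_phiInt_of_le_genInv (ofReal_le_genInv fun s _ hs => not_lt.1 fun h =>
          (hf₁u s h).not_gt hs)

end GeneralizedInverse

section ProductFunctions

variable {p : ℕ → ℝ → ℝ}

lemma prod_pow_mem_Icc (hp01 : ∀ i t, p i t ∈ Set.Icc (0 : ℝ) 1) (s : Finset ℕ) (e : ℕ → ℕ)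
    (t : ℝ) : ∏ i ∈ s, p i t ^ e i ∈ Set.Icc (0 : ℝ) 1 :=
  ⟨prod_nonneg fun i _ => pow_nonneg (hp01 i t).1 _,
    prod_le_one (fun i _ => pow_nonneg (hp01 i t).1 _)
      fun i _ => pow_le_one₀ (hp01 i t).1 (hp01 i t).2⟩

lemma monotone_prod_pow (hp01 : ∀ i t, p i t ∈ Set.Icc (0 : ℝ) 1) (hmono : ∀ i, Monotone (p i))
    (s : Finset ℕ) (e : ℕ → ℕ) : Monotone fun t => ∏ i ∈ s, p i t ^ e i := fun _ _ hab =>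
  prod_le_prod (fun i _ => pow_nonneg (hp01 i _).1 _)
    fun i _ => pow_le_pow_left₀ (hp01 i _).1 (hmono i hab) _

lemma continuousWithinAt_prod_pow (hrc : ∀ i t, ContinuousWithinAt (p i) (Set.Ici t) t)
    (s : Finset ℕ) (e : ℕ → ℕ) (t : ℝ) :
    ContinuousWithinAt (fun x => ∏ i ∈ s, p i x ^ e i) (Set.Ici t) t :=
  tendsto_finsetProd _ fun i _ => (hrc i t).pow _

lemma qFun_eq_zero_iff (p : ℕ → ℝ → ℝ) (k : ℕ) (t : ℝ) :
    qFun p k t = 0 ↔ ∃ i ≤ k, p i t = 0 := by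
  simp only [qFun, prod_eq_zero_iff, mem_range, Nat.lt_succ_iff, pow_eq_zero_iff', ne_eq]
  exact exists_congr fun i => and_congr_right fun hi =>
    and_iff_left (Nat.choose_pos (by omega)).ne'

lemma rPrevFun_ne_zero {k : ℕ} {t : ℝ} (hq : qFun p k t ≠ 0) : rPrevFun p k t ≠ 0 := by
  rw [Ne, qFun_eq_zero_iff, not_exists] at hq
  exact prod_ne_zero_iff.2 fun i hi =>
    pow_ne_zero _ fun h => hq i ⟨Nat.lt_succ_iff.1 (mem_range.1 hi), h⟩

/-- Pascal's rule `C(k+1, i+1) = C(k, i) + C(k, i+1)`. -/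
lemma rCurFun_eq_rPrevFun_mul (p : ℕ → ℝ → ℝ) (k : ℕ) (t : ℝ) :
    rCurFun p k t = rPrevFun p k t * ∏ i ∈ range (k + 1), p (i + 1) t ^ k.choose i := by
  have hprev : rPrevFun p k t = ∏ i ∈ range (k + 2), p i t ^ k.choose i := by
    rw [rPrevFun, prod_range_succ _ (k + 1), Nat.choose_succ_self, pow_zero, mul_one]
  rw [rCurFun, hprev, prod_range_succ', prod_range_succ' _ (k + 1)]
  simp only [Nat.choose_succ_succ, pow_add, prod_mul_distrib, Nat.choose_zero_right]
  ring

lemma rCurFun_le_rPrevFun (hp01 : ∀ i t, p i t ∈ Set.Icc (0 : ℝ) 1) (k : ℕ) (t : ℝ) :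
    rCurFun p k t ≤ rPrevFun p k t := by
  rw [rCurFun_eq_rPrevFun_mul]
  exact mul_le_of_le_one_right (prod_pow_mem_Icc hp01 _ _ t).1
    (prod_pow_mem_Icc (p := fun i => p (i + 1)) (fun i => hp01 (i + 1)) _ _ t).2

end ProductFunctions

section Dichotomy

variable {p : ℕ → ℝ → ℝ} {k : ℕ} {t : ℝ}

lemma rCurFun_eq_rPrevFun_of_phiInt_eq (hp01 : ∀ i t, p i t ∈ Set.Icc (0 : ℝ) 1)
    (hmono : ∀ i, Monotone (p i)) (hrc : ∀ i t, ContinuousWithinAt (p i) (Set.Ici t) t)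
    (hΦΨ : ∀ u : ℝ, 0 ≤ u → u < 1 →
      phiInt (rCurFun p k) (qFun p k) u = phiInt (rPrevFun p k) (qFun p k) u)
    (ht : 0 ≤ t) (hq : qFun p k t ≠ 0) : rCurFun p k t = rPrevFun p k t := by
  refine (rCurFun_le_rPrevFun hp01 k t).eq_of_not_lt fun hlt => ?_
  have hcur : 0 ≤ rCurFun p k t := (prod_pow_mem_Icc hp01 _ _ t).1
  have hprev : rPrevFun p k t ≤ 1 := (prod_pow_mem_Icc hp01 _ _ t).2
  have hqpos : 0 < qFun p k t := (prod_pow_mem_Icc hp01 _ _ t).1.lt_of_ne' hq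
  obtain ⟨u, hcu, hup⟩ := exists_between hlt
  exact (phiInt_lt_phiInt (monotone_prod_pow hp01 hmono _ _)
    (continuousWithinAt_prod_pow hrc _ _ t) (monotone_prod_pow hp01 hmono _ _) ht hqpos hcu
    hup).ne' (hΦΨ u (by linarith) (by linarith))

lemma eq_one_of_rCurFun_eq_rPrevFun (hp01 : ∀ i t, p i t ∈ Set.Icc (0 : ℝ) 1)
    (h : rCurFun p k t = rPrevFun p k t) (hq : qFun p k t ≠ 0) {i : ℕ} (hi1 : 1 ≤ i)
    (hik : i ≤ k + 1) : p i t = 1 := by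
  have hprod : ∏ j ∈ range (k + 1), p (j + 1) t ^ k.choose j = 1 := by
    rw [rCurFun_eq_rPrevFun_mul] at h
    exact (mul_eq_left₀ (rPrevFun_ne_zero hq)).1 h
  have hle : 1 ≤ p i t ^ k.choose (i - 1) :=
    calc 1 = ∏ j ∈ range (k + 1), p (j + 1) t ^ k.choose j := hprod.symm
      _ ≤ ∏ j ∈ {i - 1}, p (j + 1) t ^ k.choose j :=
        prod_le_prod_of_subset_of_le_one (singleton_subset_iff.2 (mem_range.2 (by omega)))
          (fun j _ => pow_nonneg (hp01 _ t).1 _)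
          fun j _ _ => pow_le_one₀ (hp01 _ t).1 (hp01 _ t).2
      _ = p i t ^ k.choose (i - 1) := by rw [prod_singleton, Nat.sub_add_cancel hi1]
  exact (pow_eq_one_iff_of_nonneg (hp01 i t).1 (Nat.choose_pos (by omega)).ne').1
    (le_antisymm (pow_le_one₀ (hp01 i t).1 (hp01 i t).2) hle)

lemma qFun_eq_zero_or_eq_one_of_phiInt_eq (hp01 : ∀ i t, p i t ∈ Set.Icc (0 : ℝ) 1)
    (hmono : ∀ i, Monotone (p i)) (hrc : ∀ i t, ContinuousWithinAt (p i) (Set.Ici t) t)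
    (hΦΨ : ∀ u : ℝ, 0 ≤ u → u < 1 →
      phiInt (rCurFun p k) (qFun p k) u = phiInt (rPrevFun p k) (qFun p k) u)
    (ht : 0 ≤ t) : qFun p k t = 0 ∨ ∀ i, 1 ≤ i → i ≤ k + 1 → p i t = 1 :=
  or_iff_not_imp_left.2 fun hq _ =>
    eq_one_of_rCurFun_eq_rPrevFun hp01
      (rCurFun_eq_rPrevFun_of_phiInt_eq hp01 hmono hrc hΦΨ ht hq) hq

end Dichotomy

section RandomComplex

variable {n : ℕ}

lemma faces_XprocAt_eq_empty {ω : Finset (Fin n) → ℝ} {t : ℝ} {i k : ℕ} (hik : i ≤ k)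
    (h : ∀ ρ : Finset (Fin n), #ρ = i + 1 → t < ω ρ) : faces (XprocAt ω t) (k + 1) = ∅ := by
  refine eq_empty_iff_forall_notMem.2 fun s hs => ?_
  simp only [faces, XprocAt, mem_filter, mem_insert, mem_univ, true_and, mem_powerset] at hs
  obtain ⟨hs | ⟨-, hfaces⟩, hcard⟩ := hs
  · simp [hs] at hcard
  obtain ⟨ρ, hρs, hρ⟩ := exists_subset_card_eq (show i + 1 ≤ #s by omega)
  exact (h ρ hρ).not_ge (hfaces ρ hρs (by rintro rfl; simp at hρ))

lemma hasCompleteSkeleton_XprocAt {ω : Finset (Fin n) → ℝ} {t : ℝ} {m : ℕ}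
    (h : ∀ ρ : Finset (Fin n), 2 ≤ #ρ → #ρ ≤ m → ω ρ ≤ t) :
    HasCompleteSkeleton (XprocAt ω t) {v | ω {v} ≤ t} m := by
  intro s hs hsm
  simp only [XprocAt, mem_filter, mem_univ, true_and, mem_powerset, hs, ne_eq, not_false_eq_true]
  refine ⟨fun hfaces v hv => by simpa using hfaces {v} (by simpa) (by simp), ?_⟩
  intro hsV ρ hρs hρ
  rcases le_or_gt 2 #ρ with h2 | h2
  · exact h ρ h2 ((card_le_card hρs).trans hsm)
  · have := card_pos.2 (nonempty_iff_ne_empty.2 hρ)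
    obtain ⟨v, rfl⟩ := card_eq_one.1 (show #ρ = 1 by omega)
    simpa using hsV (hρs (mem_singleton_self v))

instance (p : ℕ → StieltjesFunction ℝ) : SigmaFinite (procMeasure n p) := by
  unfold procMeasure; infer_instance

variable {p : ℕ → StieltjesFunction ℝ}

lemma ae_lt_apply_of_eq_zero (hp0 : ∀ i, ∀ t < (0 : ℝ), p i t = 0) {t : ℝ}
    (ρ : Finset (Fin n)) (hρ : p (#ρ - 1) t = 0) : ∀ᵐ ω ∂procMeasure n p, t < ω ρ := by
  have hbot : Filter.Tendsto (p (#ρ - 1)) Filter.atBot (nhds 0) :=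
    tendsto_const_nhds.congr' ((Filter.eventually_lt_atBot 0).mono fun s hs => (hp0 _ s hs).symm)
  simp only [ae_iff, not_lt]
  exact Measure.pi_eval_preimage_null (fun σ : Finset (Fin n) => (p (#σ - 1)).measure)
    (s := Set.Iic t)
    (by rw [StieltjesFunction.measure_Iic _ hbot, hρ, sub_zero, ENNReal.ofReal_zero])

lemma ae_apply_le_of_eq_one (hp1 : ∀ i, Filter.Tendsto (p i) Filter.atTop (nhds 1)) {t : ℝ}
    (ρ : Finset (Fin n)) (hρ : p (#ρ - 1) t = 1) : ∀ᵐ ω ∂procMeasure n p, ω ρ ≤ t := by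
  simp only [ae_iff, not_le]
  exact Measure.pi_eval_preimage_null (fun σ : Finset (Fin n) => (p (#σ - 1)).measure)
    (s := Set.Ioi t)
    (by rw [StieltjesFunction.measure_Ioi _ (hp1 _), hρ, sub_self, ENNReal.ofReal_zero])

lemma ae_betti_XprocAt_eq_zero (hp0 : ∀ i, ∀ t < (0 : ℝ), p i t = 0)
    (hp1 : ∀ i, Filter.Tendsto (p i) Filter.atTop (nhds 1)) {k : ℕ} {t : ℝ}
    (h : qFun (fun i t => p i t) k t = 0 ∨ ∀ i, 1 ≤ i → i ≤ k + 1 → p i t = 1) :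
    ∀ᵐ ω ∂procMeasure n p, betti (XprocAt ω t) k = 0 := by
  rcases h with hq | hone
  · obtain ⟨i, hik, hi⟩ := (qFun_eq_zero_iff _ k t).1 hq
    have : ∀ᵐ ω ∂procMeasure n p, ∀ ρ : Finset (Fin n), #ρ = i + 1 → t < ω ρ :=
      ae_all_iff.2 fun ρ => by
        by_cases hρ : #ρ = i + 1
        · exact (ae_lt_apply_of_eq_zero hp0 ρ (by rwa [hρ])).mono fun _ h _ => h
        · exact ae_of_all _ fun _ h => absurd h hρ
    filter_upwards [this] with ω hω
    exact betti_eq_zero_of_faces_eq_empty (faces_XprocAt_eq_empty hik hω)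
  · have : ∀ᵐ ω ∂procMeasure n p, ∀ ρ : Finset (Fin n), 2 ≤ #ρ → #ρ ≤ k + 2 → ω ρ ≤ t :=
      ae_all_iff.2 fun ρ => by
        by_cases hρ : 2 ≤ #ρ ∧ #ρ ≤ k + 2
        · exact (ae_apply_le_of_eq_one hp1 ρ (hone _ (by omega) (by omega))).mono
            fun _ h _ _ => h
        · exact ae_of_all _ fun _ h₁ h₂ => absurd ⟨h₁, h₂⟩ hρ
    filter_upwards [this] with ω hω
    exact (hasCompleteSkeleton_XprocAt hω).betti_eq_zero

lemma measurableSet_mem_XprocAt (σ : Finset (Fin n)) :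
    MeasurableSet {q : (Finset (Fin n) → ℝ) × ℝ | σ ∈ XprocAt q.1 q.2} := by
  simp only [XprocAt, mem_filter, mem_univ, true_and, measurableSet_setOfPred]
  exact measurable_const.and <| Measurable.forall fun ρ => measurable_const.imp <|
    measurable_const.imp <| measurableSet_setOfPred.1 <|
      measurableSet_le (measurable_pi_apply ρ |>.comp measurable_fst) measurable_snd

lemma measurableSet_XprocAt_mem (C : Set (Finset (Finset (Fin n)))) :
    MeasurableSet {q : (Finset (Fin n) → ℝ) × ℝ | XprocAt q.1 q.2 ∈ C} := by
  have hC : {q : (Finset (Fin n) → ℝ) × ℝ | XprocAt q.1 q.2 ∈ C} =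
      ⋃ c ∈ C, {q | ∀ σ, σ ∈ XprocAt q.1 q.2 ↔ σ ∈ c} := by
    ext q; simp [← Finset.ext_iff]
  rw [hC]
  exact .biUnion C.to_countable fun c _ => measurableSet_setOfPred.2 <|
    Measurable.forall fun σ => (measurableSet_setOfPred.1 (measurableSet_mem_XprocAt σ)).iff
      measurable_const

lemma ae_lintegral_betti_eq_zero {μ : Measure (Finset (Fin n) → ℝ)} [SFinite μ] {k : ℕ}
    (h : ∀ t : ℝ, 0 ≤ t → ∀ᵐ ω ∂μ, betti (XprocAt ω t) k = 0) :
    ∀ᵐ ω ∂μ, (∫⁻ t in Set.Ici (0 : ℝ), (betti (XprocAt ω t) k : ℝ≥0∞)) = 0 := by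
  have hae : ∀ᵐ t ∂volume.restrict (Set.Ici (0 : ℝ)), ∀ᵐ ω ∂μ, betti (XprocAt ω t) k = 0 :=
    (ae_restrict_iff' measurableSet_Ici).2 (ae_of_all _ h)
  filter_upwards [(Measure.ae_ae_comm (measurableSet_XprocAt_mem {c | betti c k = 0})).2 hae]
    with ω hω
  exact (lintegral_congr_ae (hω.mono fun t ht => by simp [ht])).trans lintegral_zero

end RandomComplex

/-- For the multi-parameter random complex process with distribution
functions `p_i` (nondecreasing, right-continuous, `[0,1]`-valued, vanishing for `t < 0`,
tending to `1`), if `Φ_k(u) = Ψ_k(u)` for all `u ∈ [0,1)` — where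
`Φ_k(u) = ∫_0^{ř_k(u)} q_k(s) ds` and `Ψ_k(u) = ∫_0^{ř_{k−1}(u)} q_k(s) ds` — then for every
`t ≥ 0` either `q_k(t) = 0` or `p_i(t) = 1` for all `1 ≤ i ≤ k+1`; consequently
`β_k(X_n(t)) = 0` almost surely for every `t ≥ 0`, and the `k`-th lifetime sum
`L_k(𝒳_n) = ∫_0^∞ β_k(X_n(t)) dt` is `0` almost surely. -/
theorem statement17 (n k : ℕ) (p : ℕ → StieltjesFunction ℝ)
    (hp01 : ∀ i, ∀ t : ℝ, p i t ∈ Set.Icc (0 : ℝ) 1)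
    (hp0 : ∀ i, ∀ t < (0 : ℝ), p i t = 0)
    (hp1 : ∀ i, Filter.Tendsto (p i) Filter.atTop (nhds 1))
    (hΦΨ : ∀ u : ℝ, 0 ≤ u → u < 1 →
      phiInt (rCurFun (fun i t => p i t) k) (qFun (fun i t => p i t) k) u
        = phiInt (rPrevFun (fun i t => p i t) k) (qFun (fun i t => p i t) k) u) :
    (∀ t : ℝ, 0 ≤ t →
      qFun (fun i t => p i t) k t = 0 ∨ ∀ i, 1 ≤ i → i ≤ k + 1 → p i t = 1) ∧
    (∀ t : ℝ, 0 ≤ t → ∀ᵐ ω ∂procMeasure n p, betti (XprocAt ω t) k = 0) ∧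
    ∀ᵐ ω ∂procMeasure n p,
      (∫⁻ t in Set.Ici (0 : ℝ), (betti (XprocAt ω t) k : ℝ≥0∞)) = 0 := by
  have hdich : ∀ t : ℝ, 0 ≤ t →
      qFun (fun i t => p i t) k t = 0 ∨ ∀ i, 1 ≤ i → i ≤ k + 1 → p i t = 1 := fun _ ht =>
    qFun_eq_zero_or_eq_one_of_phiInt_eq hp01 (fun i => (p i).mono)
      (fun i => (p i).right_continuous) hΦΨ ht
  have hbetti : ∀ t : ℝ, 0 ≤ t → ∀ᵐ ω ∂procMeasure n p, betti (XprocAt ω t) k = 0 :=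
    fun t ht => ae_betti_XprocAt_eq_zero hp0 hp1 (hdich t ht)
  exact ⟨hdich, hbetti, ae_lintegral_betti_eq_zero hbetti⟩
end
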